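/- arXiv:1905.03085 — 10 statements merged into one kernel-verified Lean document; each statement's English description precedes it below -/
import Mathlib

section
/- Let A be a commutative ring and π ∈ A a non-zero-divisor, and let M be an A-module. Then M is flat over A if and only if: (i) the π-torsion submodule {x ∈ M : π^n x = 0 for some n ∈ ℕ} is trivial, (ii) M/πM is flat over A/πA, and (iii) M ⊗_A A[π⁻¹] is flat over A[π⁻¹]. -/
set_option maxHeartbeats 1600000
set_option synthInstance.maxHeartbeats 400000

open TensorProduct

section Aux

variable {A : Type*} [CommRing A] {π : A}
variable {M : Type*} [AddCommGroup M] [Module A M]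

/-- Every element of `A ⧸ (π)` is killed by `π`. -/
private lemma pi_smul_quot_eq_zero (y : A ⧸ Ideal.span {π}) : π • y = 0 := by
  rw [Algebra.smul_def, Ideal.Quotient.algebraMap_eq,
    Ideal.Quotient.eq_zero_iff_mem.mpr (Ideal.mem_span_singleton_self π), zero_mul]

/-- If `P` and `Q` are `A ⧸ (π)`-modules, `f : P → Q` an injective `A ⧸ (π)`-linear map, and
`(A ⧸ (π)) ⊗[A] M` is flat over `A ⧸ (π)`, then `f ⊗ id_M : P ⊗[A] M → Q ⊗[A] M`
is injective. -/
private lemma rTensor_injective_of_quot_flat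
    (hflat : Module.Flat (A ⧸ Ideal.span {π}) ((A ⧸ Ideal.span {π}) ⊗[A] M))
    {P Q : Type*} [AddCommGroup P] [AddCommGroup Q]
    [Module (A ⧸ Ideal.span {π}) P] [Module (A ⧸ Ideal.span {π}) Q]
    [Module A P] [Module A Q]
    [IsScalarTower A (A ⧸ Ideal.span {π}) P] [IsScalarTower A (A ⧸ Ideal.span {π}) Q]
    (f : P →ₗ[A ⧸ Ideal.span {π}] Q) (hf : Function.Injective f) :
    Function.Injective (LinearMap.rTensor M (f.restrictScalars A)) := by
  set Abar := A ⧸ Ideal.span {π}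
  set Mbar := Abar ⊗[A] M
  letI eP : P ⊗[Abar] Mbar ≃ₗ[Abar] P ⊗[A] M :=
    AlgebraTensorModule.cancelBaseChange A Abar Abar P M
  letI eQ : Q ⊗[Abar] Mbar ≃ₗ[Abar] Q ⊗[A] M :=
    AlgebraTensorModule.cancelBaseChange A Abar Abar Q M
  have hmid : Function.Injective (LinearMap.rTensor Mbar f) :=
    Module.Flat.rTensor_preserves_injective_linearMap f hf
  have key : LinearMap.rTensor M (f.restrictScalars A) =
      (eQ.restrictScalars A).toLinearMap ∘ₗ
        ((LinearMap.rTensor Mbar f).restrictScalars A) ∘ₗ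
          (eP.symm.restrictScalars A).toLinearMap := by
    apply TensorProduct.ext'
    intro p m
    simp only [eP, eQ, LinearMap.coe_comp, Function.comp_apply, LinearEquiv.coe_coe,
      LinearEquiv.restrictScalars_apply, LinearMap.coe_restrictScalars,
      LinearMap.rTensor_tmul]
    rw [AlgebraTensorModule.cancelBaseChange_symm_tmul, LinearMap.rTensor_tmul,
      AlgebraTensorModule.cancelBaseChange_tmul, one_smul]
  rw [key]
  exact (eQ.restrictScalars A).injective.comp (hmid.comp (eP.symm.restrictScalars A).injective)

/-- Step 1: if `π` is regular on `A` and on `M`, and `M/πM` is flat over `A/πA`, then `π` is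
regular on `I ⊗[A] M` for every finitely generated ideal `I`. -/
private lemma smul_regular_on_ideal_tensor
    (hπ : ∀ a : A, π * a = 0 → a = 0)
    (hM : ∀ m : M, π • m = 0 → m = 0)
    (hflat : Module.Flat (A ⧸ Ideal.span {π}) ((A ⧸ Ideal.span {π}) ⊗[A] M))
    {I : Ideal A} (hI : I.FG) :
    ∀ x : (I : Submodule A A) ⊗[A] M, π • x = 0 → x = 0 := by
  classical
  set Abar := A ⧸ Ideal.span {π}
  obtain ⟨n, gen, hspan⟩ := Submodule.fg_iff_exists_fin_generating_family.mp hI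
  -- the presentation `φ : F = A^n → I`
  have hgen : ∀ i, gen i ∈ I := by
    intro i
    rw [← hspan]
    exact Submodule.subset_span (Set.mem_range_self i)
  have hrange : ∀ v : Fin n → A, Fintype.linearCombination A gen v ∈ I := by
    intro v
    rw [Fintype.linearCombination_apply]
    exact Submodule.sum_mem I fun i _ => Submodule.smul_mem I (v i) (hgen i)
  set φ : (Fin n → A) →ₗ[A] I :=
    LinearMap.codRestrict (I.restrictScalars A) (Fintype.linearCombination A gen)
      hrange with hφdef
  have hφsurj : Function.Surjective φ := by
    rintro ⟨y, hy⟩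
    rw [← hspan] at hy
    obtain ⟨c, hc⟩ := (Submodule.mem_span_range_iff_exists_fun A).mp hy
    refine ⟨c, ?_⟩
    apply Subtype.ext
    show Fintype.linearCombination A gen c = y
    rw [Fintype.linearCombination_apply]
    exact hc
  set F := Fin n → A
  set K : Submodule A F := LinearMap.ker φ
  -- regularity of π on F ⊗ M via `Fin n →₀ M`
  have hFMreg : ∀ z : F ⊗[A] M, π • z = 0 → z = 0 := by
    intro z hz
    letI e : F ⊗[A] M ≃ₗ[A] (Fin n →₀ M) :=
      (TensorProduct.congr (Finsupp.linearEquivFunOnFinite A A (Fin n)).symm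
        (LinearEquiv.refl A M)) ≪≫ₗ finsuppScalarLeft A M (Fin n)
    have : e z = 0 := by
      have h1 : π • e z = 0 := by rw [← map_smul, hz, map_zero]
      ext i
      have := congrArg (fun w => Finsupp.toFun w i) h1
      exact hM _ this
    simpa using congrArg e.symm this
  -- the mod-π data
  set Fbar := Fin n → Abar
  set qbar : F →ₗ[A] Fbar :=
    LinearMap.pi (fun i => (Algebra.linearMap A Abar).comp (LinearMap.proj i)) with hqbar
  set p : K →ₗ[A] Fbar := qbar ∘ₗ K.subtype with hp
  set Kbar : Submodule Abar Fbar := Submodule.span Abar (Set.range p) with hKbar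
  have hmemK : ∀ k : K, p k ∈ Kbar := fun k =>
    Submodule.subset_span (Set.mem_range_self k)
  set p' : K →ₗ[A] Kbar :=
    { toFun := fun k => ⟨p k, hmemK k⟩
      map_add' := fun k l => Subtype.ext (map_add p k l)
      map_smul' := fun a k => Subtype.ext (map_smul p a k) } with hp'
  have hsub : ((Kbar.subtype).restrictScalars A) ∘ₗ p' = p := rfl
  have hp'surj : Function.Surjective p' := by
    rintro ⟨y, hy⟩
    have : ∃ k : K, p k = y := by
      induction hy using Submodule.span_induction with
      | mem z hz => obtain ⟨k, rfl⟩ := hz; exact ⟨k, rfl⟩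
      | zero => exact ⟨0, map_zero p⟩
      | add y z _ _ hy hz =>
          obtain ⟨k, rfl⟩ := hy; obtain ⟨l, rfl⟩ := hz; exact ⟨k + l, map_add p k l⟩
      | smul c y _ hy =>
          obtain ⟨k, rfl⟩ := hy
          obtain ⟨a, rfl⟩ := Ideal.Quotient.mk_surjective c
          refine ⟨a • k, ?_⟩
          rw [map_smul]
          rw [show (Ideal.Quotient.mk (Ideal.span {π}) a) = algebraMap A Abar a from rfl,
            algebraMap_smul]
    obtain ⟨k, hk⟩ := this
    exact ⟨k, Subtype.ext hk⟩
  -- start of the chase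
  intro x hx
  obtain ⟨mt, hmt⟩ := LinearMap.rTensor_surjective M hφsurj x
  have hker : LinearMap.rTensor M φ (π • mt) = 0 := by
    rw [map_smul, hmt, hx]
  have hexact1 : Function.Exact (LinearMap.rTensor M K.subtype) (LinearMap.rTensor M φ) :=
    rTensor_exact M (LinearMap.exact_subtype_ker_map φ) hφsurj
  obtain ⟨u, hu⟩ := (hexact1 (π • mt)).mp hker
  -- the image of `u` in `Kbar ⊗ M` is zero
  have hFbarM : ∀ w : Fbar ⊗[A] M, π • w = 0 := by
    intro w
    induction w using TensorProduct.induction_on with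
    | zero => rw [smul_zero]
    | tmul v m =>
        rw [smul_tmul']
        have : π • v = 0 := funext fun i => pi_smul_quot_eq_zero (v i)
        rw [this, zero_tmul]
    | add a b ha hb => rw [smul_add, ha, hb, add_zero]
  have hpu : LinearMap.rTensor M p u = 0 := by
    rw [hp, LinearMap.rTensor_comp, LinearMap.comp_apply, hu, map_smul]
    exact hFbarM _
  have hp'u : LinearMap.rTensor M p' u = 0 := by
    have hinj := rTensor_injective_of_quot_flat hflat Kbar.subtype Kbar.injective_subtype
    apply hinj
    rw [map_zero, ← LinearMap.comp_apply, ← LinearMap.rTensor_comp, hsub, hpu]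
  -- hence `u` comes from `K₀ ⊗ M` with `K₀ = ker p'`
  obtain ⟨t, ht⟩ :=
    (rTensor_exact (M := LinearMap.ker p') M (LinearMap.exact_subtype_ker_map p') hp'surj u).mp
      hp'u
  -- the division-by-π map `δ : K₀ → K`
  set ρ : K →ₗ[A] K := π • LinearMap.id with hρ
  have hρinj : Function.Injective ρ := by
    intro k l hkl
    have hc : π • (k : F) = π • (l : F) := by
      have h1 : π • (k : F) = ((ρ k : K) : F) := rfl
      have h2 : π • (l : F) = ((ρ l : K) : F) := rfl
      rw [h1, h2, hkl]
    have : (k : F) = (l : F) := by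
      funext i
      have hi : π * (k : F) i = π * (l : F) i := by
        have := congrArg (fun v : F => v i) hc
        exact this
      have h0 := hπ ((k : F) i - (l : F) i) (by rw [mul_sub, hi, sub_self])
      rwa [sub_eq_zero] at h0
    exact Subtype.ext this
  have hK₀le : ∀ k : K, k ∈ LinearMap.ker p' → k ∈ LinearMap.range ρ := by
    intro k hk
    have hpk : p k = 0 := by
      have : (p' k : Fbar) = 0 := by
        rw [show p' k = 0 from hk]; rfl
      exact this
    have hcoord : ∀ i, (k : F) i ∈ Ideal.span {π} := by
      intro i
      have := congrArg (fun v => v i) hpk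
      exact Ideal.Quotient.eq_zero_iff_mem.mp this
    choose c hc using fun i => Ideal.mem_span_singleton'.mp (hcoord i)
    have hvk : π • (c : F) = (k : F) := by
      funext i
      rw [Pi.smul_apply, smul_eq_mul, mul_comm]
      exact hc i
    have hvK : (c : F) ∈ K := by
      have h1 : π • φ c = 0 := by
        rw [← map_smul, hvk]
        exact k.2
      have h2 : π • ((φ c : A)) = 0 := by
        have := congrArg (fun z : I => (z : A)) h1
        simpa using this
      have : ((φ c : A)) = 0 := hπ _ (by rwa [smul_eq_mul] at h2)
      exact Subtype.ext this
    refine ⟨⟨c, hvK⟩, ?_⟩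
    apply Subtype.ext
    show π • (c : F) = (k : F)
    exact hvk
  letI eρ : K ≃ₗ[A] LinearMap.range ρ := LinearEquiv.ofInjective ρ hρinj
  set j : LinearMap.ker p' →ₗ[A] LinearMap.range ρ :=
    LinearMap.codRestrict (LinearMap.range ρ) (LinearMap.ker p').subtype
      (fun k => hK₀le k k.2) with hj
  set δ : LinearMap.ker p' →ₗ[A] K := eρ.symm.toLinearMap ∘ₗ j with hδ
  have hδkey : K.subtype ∘ₗ (LinearMap.ker p').subtype = π • (K.subtype ∘ₗ δ) := by
    apply LinearMap.ext
    intro k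
    have h1 : ρ (δ k) = (k : K) := by
      have h2 : ρ (eρ.symm (j k)) = ((eρ (eρ.symm (j k))) : K) := by
        rw [show ∀ z : K, ((eρ z : K)) = ρ z from fun z => rfl]
      rw [hδ]
      simp only [LinearMap.comp_apply, LinearEquiv.coe_toLinearMap]
      rw [h2, eρ.apply_symm_apply]
      rfl
    show ((k : K) : F) = π • ((δ k : K) : F)
    have h3 : ((ρ (δ k) : K) : F) = (((k : K)) : F) := congrArg (fun z : K => (z : F)) h1
    have h4 : ((ρ (δ k) : K) : F) = π • ((δ k : K) : F) := rfl
    rw [← h3, h4]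
  -- conclude
  have hmt' : π • mt = π • (LinearMap.rTensor M (K.subtype ∘ₗ δ) t) := by
    rw [← hu, ← ht, ← LinearMap.comp_apply, ← LinearMap.rTensor_comp]
    rw [show K.subtype ∘ₗ (LinearMap.ker p').subtype = π • (K.subtype ∘ₗ δ) from hδkey]
    rw [LinearMap.rTensor_smul, LinearMap.smul_apply]
  have hmm : mt = LinearMap.rTensor M (K.subtype ∘ₗ δ) t := by
    have := hFMreg (mt - LinearMap.rTensor M (K.subtype ∘ₗ δ) t) (by rw [smul_sub, hmt', sub_self])
    rwa [sub_eq_zero] at this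
  have hzero : φ ∘ₗ (K.subtype ∘ₗ δ) = 0 := by
    rw [← LinearMap.comp_assoc]
    have : φ ∘ₗ K.subtype = 0 := by
      apply LinearMap.ext; intro k; exact k.2
    rw [this, LinearMap.zero_comp]
  rw [← hmt, hmm, ← LinearMap.comp_apply, ← LinearMap.rTensor_comp, hzero,
    LinearMap.rTensor_zero, LinearMap.zero_apply]

end Aux

/-- Lemma 8.2/1: For a non-zero-divisor `π` in a commutative ring `A` and an `A`-module `M`,
`M` is flat over `A` iff the `π`-power torsion of `M` is trivial, `M/πM` is flat over `A/πA`,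
and `M ⊗_A A[π⁻¹]` is flat over `A[π⁻¹]`. -/
theorem flat_iff_torsionFree_and_flat_mod_and_flat_loc
    (A : Type*) [CommRing A] (π : A) (hπ : ∀ a : A, π * a = 0 → a = 0)
    (M : Type*) [AddCommGroup M] [Module A M] :
    Module.Flat A M ↔
      ((∀ x : M, (∃ n : ℕ, π ^ n • x = 0) → x = 0) ∧
        Module.Flat (A ⧸ Ideal.span {π}) ((A ⧸ Ideal.span {π}) ⊗[A] M) ∧
        Module.Flat (Localization.Away π) (Localization.Away π ⊗[A] M)) := by
  constructor
  · intro hflat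
    refine ⟨?_, inferInstance, inferInstance⟩
    -- torsion-freeness
    have hAreg : IsSMulRegular A π := by
      intro a b hab
      have : π * (a - b) = 0 := by
        rw [mul_sub, sub_eq_zero]
        exact hab
      have := hπ _ this
      rwa [sub_eq_zero] at this
    have hMAreg : IsSMulRegular (M ⊗[A] A) π := IsSMulRegular.lTensor M hAreg
    have hMreg : IsSMulRegular M π :=
      hMAreg.of_injective (TensorProduct.rid A M).symm.toLinearMap
        (TensorProduct.rid A M).symm.injective
    rintro x ⟨n, hn⟩
    refine (hMreg.pow n) ?_
    show π ^ n • x = π ^ n • (0 : M)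
    rw [hn, smul_zero]
  · rintro ⟨h1, h2, h3⟩
    have hreg : ∀ m : M, π • m = 0 → m = 0 := fun m hm => h1 m ⟨1, by simpa using hm⟩
    rw [Module.Flat.iff_rTensor_injective]
    intro I hI
    have hker : ∀ x : (I : Submodule A A) ⊗[A] M, LinearMap.rTensor M I.subtype x = 0 → x = 0 := by
      intro x hx
      -- Step 2: `x` is killed by a power of `π`
      set S := Localization.Away π
      haveI hSflat : Module.Flat A S := IsLocalization.flat S (Submonoid.powers π)
      haveI hSM : Module.Flat S (S ⊗[A] M) := h3
      haveI : Module.Flat A (S ⊗[A] M) := Module.Flat.trans A S (S ⊗[A] M)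
      set g : M →ₗ[A] S ⊗[A] M := TensorProduct.mk A S M 1 with hg
      have hcomm : LinearMap.rTensor (S ⊗[A] M) I.subtype ((LinearMap.lTensor I g) x)
          = (LinearMap.lTensor A g) (LinearMap.rTensor M I.subtype x) := by
        rw [← LinearMap.comp_apply, ← LinearMap.comp_apply, LinearMap.rTensor_comp_lTensor,
          LinearMap.lTensor_comp_rTensor]
      have hlt : LinearMap.lTensor I g x = 0 := by
        have hinj : Function.Injective (LinearMap.rTensor (S ⊗[A] M) I.subtype) :=
          Module.Flat.rTensor_preserves_injective_linearMap I.subtype I.injective_subtype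
        apply hinj
        rw [hcomm, hx, map_zero, map_zero]
      set mk1 : ((I : Submodule A A) ⊗[A] M) →ₗ[A] (S ⊗[A] ((I : Submodule A A) ⊗[A] M)) :=
        TensorProduct.mk A S ((I : Submodule A A) ⊗[A] M) 1 with hmk1
      letI e := TensorProduct.leftComm A S (I : Submodule A A) M
      have hcompat : e.toLinearMap ∘ₗ mk1 = LinearMap.lTensor I g := by
        apply TensorProduct.ext'
        intro i m
        simp [e, hmk1, TensorProduct.leftComm_tmul, hg]
      have hmk0 : mk1 x = 0 := by
        apply e.injective
        rw [map_zero, show e (mk1 x) = (e.toLinearMap ∘ₗ mk1) x from rfl, hcompat, hlt]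
      haveI : IsLocalizedModule (Submonoid.powers π) mk1 :=
        (isLocalizedModule_iff_isBaseChange (Submonoid.powers π) S mk1).mpr
          (TensorProduct.isBaseChange A ((I : Submodule A A) ⊗[A] M) S)
      obtain ⟨s, hs⟩ := (IsLocalizedModule.eq_zero_iff (Submonoid.powers π) mk1).mp hmk0
      obtain ⟨n, hn⟩ := s.2
      have hpow : π ^ n • x = 0 := by
        have hsx : (s : A) • x = 0 := by rw [← Submonoid.smul_def, hs]
        rw [← hn] at hsx
        exact hsx
      -- Step 1 + induction on `n`
      have step1 := smul_regular_on_ideal_tensor hπ hreg h2 hI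
      have : ∀ (k : ℕ) (z : (I : Submodule A A) ⊗[A] M), π ^ k • z = 0 → z = 0 := by
        intro k
        induction k with
        | zero => intro z hz; simpa using hz
        | succ k ih =>
            intro z hz
            refine step1 z (ih (π • z) ?_)
            rw [← hz, ← mul_smul, ← pow_succ]
      exact this n x hpow
    intro a b hab
    have : a - b = 0 := hker _ (by rw [map_sub, hab, sub_self])
    rwa [sub_eq_zero] at this
end

section
/- Let R be a local ring with maximal ideal m generated by a family (a_λ)_{λ∈Λ} and residue field k = R/m. Let S = ⋃_i R[a_λ^{1/d^i}] be the ring obtained by adjoining compatible d^i-th roots of all generators, and let m' be the ideal of S generated by {a_λ^{1/d^i}}. Then S is a local ring with maximal ideal m' and residue field S/m' ≅ k. -/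
open MvPolynomial

/-- The relations defining `S = ⋃_i R[a_λ^{1/d^i}]`: generators `x_{λ,0} = a_λ` and
`x_{λ,i+1}^d = x_{λ,i}`. -/
noncomputable def ekaFamRelations (R : Type*) [CommRing R] {Λ : Type*} (a : Λ → R) (d : ℕ) :
    Ideal (MvPolynomial (Λ × ℕ) R) :=
  Ideal.span
    (Set.range (fun lam : Λ => (X (lam, 0) : MvPolynomial (Λ × ℕ) R) - C (a lam)) ∪
      Set.range (fun li : Λ × ℕ =>
        (X (li.1, li.2 + 1) : MvPolynomial (Λ × ℕ) R) ^ d - X li))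

/-- The ring `S = ⋃_i R[a_λ^{1/d^i}]` obtained by adjoining compatible `d^i`-th roots of a
family of elements `a_λ`, presented as a quotient of a polynomial ring. -/
def EkaFamRing (R : Type*) [CommRing R] {Λ : Type*} (a : Λ → R) (d : ℕ) : Type _ :=
  MvPolynomial (Λ × ℕ) R ⧸ ekaFamRelations R a d

noncomputable instance (R : Type*) [CommRing R] {Λ : Type*} (a : Λ → R) (d : ℕ) :
    CommRing (EkaFamRing R a d) :=
  Ideal.Quotient.commRing _

/-- The image of the root `a_λ^{1/d^i}` in `EkaFamRing R a d`. -/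
noncomputable def ekaFamRoot (R : Type*) [CommRing R] {Λ : Type*} (a : Λ → R) (d : ℕ)
    (li : Λ × ℕ) : EkaFamRing R a d :=
  Ideal.Quotient.mk (ekaFamRelations R a d) (X li)

/-!
Every `x_{λ,i}` has the power `a_λ ∈ m` and is therefore integral over `R`. Hence every maximal
ideal of `S` lies over `m`, contains all `a_λ`, and so, being radical, all of their roots: it
contains `m'`. On the other hand `S / m' ≅ R / (a_λ) = k` is a field, so `m'` is maximal and
is the only maximal ideal.
-/

theorem Ideal.radical_map_maximalIdeal_le {R S : Type*} [CommRing R] [IsLocalRing R]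
    [CommRing S] [Algebra R S] [Algebra.IsIntegral R S] (J : Ideal S) [J.IsMaximal] :
    ((IsLocalRing.maximalIdeal R).map (algebraMap R S)).radical ≤ J := by
  have hlies : J.comap (algebraMap R S) = IsLocalRing.maximalIdeal R :=
    IsLocalRing.eq_maximalIdeal (Ideal.isMaximal_comap_of_isIntegral_of_isMaximal J)
  rw [Ideal.IsPrime.radical_le_iff inferInstance, Ideal.map_le_iff_le_comap, hlies]

namespace EkaFamRing

variable {R : Type*} [CommRing R] {Λ : Type*} (a : Λ → R) (d : ℕ)

noncomputable instance : Algebra R (EkaFamRing R a d) :=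
  Ideal.Quotient.algebra R

noncomputable def mk : MvPolynomial (Λ × ℕ) R →ₐ[R] EkaFamRing R a d :=
  Ideal.Quotient.mkₐ R (ekaFamRelations R a d)

theorem mk_surjective : Function.Surjective (mk a d) :=
  Ideal.Quotient.mkₐ_surjective R _

theorem mk_X (li : Λ × ℕ) : mk a d (X li) = ekaFamRoot R a d li := rfl

theorem mk_eq_mk_of_mem {p q : MvPolynomial (Λ × ℕ) R} (h : p - q ∈ ekaFamRelations R a d) :
    mk a d p = mk a d q :=
  Ideal.Quotient.eq.mpr h

theorem ekaFamRoot_zero (lam : Λ) :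
    ekaFamRoot R a d (lam, 0) = algebraMap R (EkaFamRing R a d) (a lam) := by
  rw [← mk_X, ← AlgHom.commutes (mk a d), MvPolynomial.algebraMap_eq]
  exact mk_eq_mk_of_mem a d (Ideal.subset_span (Or.inl ⟨lam, rfl⟩))

theorem ekaFamRoot_succ_pow (lam : Λ) (i : ℕ) :
    ekaFamRoot R a d (lam, i + 1) ^ d = ekaFamRoot R a d (lam, i) := by
  rw [← mk_X, ← mk_X, ← map_pow]
  exact mk_eq_mk_of_mem a d (Ideal.subset_span (Or.inr ⟨(lam, i), rfl⟩))

theorem ekaFamRoot_pow (lam : Λ) (i : ℕ) :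
    ekaFamRoot R a d (lam, i) ^ d ^ i = algebraMap R (EkaFamRing R a d) (a lam) := by
  induction i with
  | zero => simpa using ekaFamRoot_zero a d lam
  | succ i ih => rw [pow_succ', pow_mul, ekaFamRoot_succ_pow, ih]

@[elab_as_elim]
theorem induction_on {P : EkaFamRing R a d → Prop} (x : EkaFamRing R a d)
    (algebraMap : ∀ r : R, P (algebraMap R _ r)) (add : ∀ x y, P x → P y → P (x + y))
    (mul_ekaFamRoot : ∀ x li, P x → P (x * ekaFamRoot R a d li)) : P x := by
  obtain ⟨p, rfl⟩ := mk_surjective a d x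
  induction p using MvPolynomial.induction_on with
  | C r => simpa [← MvPolynomial.algebraMap_eq] using algebraMap r
  | add p q hp hq => simpa using add _ _ hp hq
  | mul_X p li hp => rw [map_mul, mk_X]; exact mul_ekaFamRoot _ li hp

theorem isIntegral_ekaFamRoot (hd : d ≠ 0) (li : Λ × ℕ) :
    IsIntegral R (ekaFamRoot R a d li) :=
  ⟨Polynomial.X ^ d ^ li.2 - Polynomial.C (a li.1),
    Polynomial.monic_X_pow_sub_C _ (pow_ne_zero _ hd), by
      simp [Polynomial.eval₂_sub, ekaFamRoot_pow a d li.1 li.2]⟩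

theorem isIntegral (hd : d ≠ 0) : Algebra.IsIntegral R (EkaFamRing R a d) :=
  ⟨fun x => induction_on a d x (fun _ => isIntegral_algebraMap) (fun _ _ => .add)
    (fun _ li hx => hx.mul (isIntegral_ekaFamRoot a d hd li))⟩

noncomputable abbrev spanRoots : Ideal (EkaFamRing R a d) :=
  Ideal.span (Set.range (ekaFamRoot R a d))

theorem spanRoots_le_radical_map :
    spanRoots a d ≤ ((Ideal.span (Set.range a)).map (algebraMap R (EkaFamRing R a d))).radical := by
  rw [Ideal.span_le]
  rintro _ ⟨⟨lam, i⟩, rfl⟩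
  exact ⟨d ^ i, by
    rw [ekaFamRoot_pow]
    exact Ideal.mem_map_of_mem _ (Ideal.subset_span ⟨lam, rfl⟩)⟩

theorem map_span_le_spanRoots :
    (Ideal.span (Set.range a)).map (algebraMap R (EkaFamRing R a d)) ≤ spanRoots a d := by
  rw [Ideal.map_span, Ideal.span_le]
  rintro _ ⟨_, ⟨lam, rfl⟩, rfl⟩
  exact ekaFamRoot_zero a d lam ▸ Ideal.subset_span ⟨(lam, 0), rfl⟩

theorem exists_sub_algebraMap_mem_spanRoots (x : EkaFamRing R a d) :
    ∃ r : R, x - algebraMap R _ r ∈ spanRoots a d := by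
  induction x using induction_on with
  | algebraMap r => exact ⟨r, by simp⟩
  | add x y hx hy =>
    obtain ⟨r, hr⟩ := hx
    obtain ⟨s, hs⟩ := hy
    exact ⟨r + s, by simpa [add_sub_add_comm] using Ideal.add_mem _ hr hs⟩
  | mul_ekaFamRoot x li _ =>
    exact ⟨0, by simpa using Ideal.mul_mem_left _ x (Ideal.subset_span (Set.mem_range_self li))⟩

noncomputable def augmentation (hd : d ≠ 0) :
    EkaFamRing R a d →+* R ⧸ Ideal.span (Set.range a) :=
  Ideal.Quotient.lift _ ((Ideal.Quotient.mk _).comp MvPolynomial.constantCoeff) <| by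
    intro p hp
    refine (Ideal.span_le (I := RingHom.ker _)).mpr ?_ hp
    rintro _ (⟨lam, rfl⟩ | ⟨li, rfl⟩)
    · simp
    · simp [zero_pow hd]

theorem augmentation_mk (hd : d ≠ 0) (p : MvPolynomial (Λ × ℕ) R) :
    augmentation a d hd (mk a d p) = Ideal.Quotient.mk _ (MvPolynomial.constantCoeff p) :=
  Ideal.Quotient.lift_mk _ _ _

theorem augmentation_algebraMap (hd : d ≠ 0) (r : R) :
    augmentation a d hd (algebraMap R _ r) = Ideal.Quotient.mk _ r := by
  rw [← AlgHom.commutes (mk a d), augmentation_mk, MvPolynomial.algebraMap_eq,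
    MvPolynomial.constantCoeff_C]

theorem augmentation_ekaFamRoot (hd : d ≠ 0) (li : Λ × ℕ) :
    augmentation a d hd (ekaFamRoot R a d li) = 0 := by
  rw [← mk_X, augmentation_mk, MvPolynomial.constantCoeff_X, map_zero]

theorem augmentation_surjective (hd : d ≠ 0) : Function.Surjective (augmentation a d hd) :=
  fun y => by
    obtain ⟨r, rfl⟩ := Ideal.Quotient.mk_surjective y
    exact ⟨algebraMap R _ r, augmentation_algebraMap a d hd r⟩

theorem ker_augmentation (hd : d ≠ 0) : RingHom.ker (augmentation a d hd) = spanRoots a d := by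
  have hle : spanRoots a d ≤ RingHom.ker (augmentation a d hd) := by
    rw [Ideal.span_le]
    rintro _ ⟨li, rfl⟩
    exact augmentation_ekaFamRoot a d hd li
  refine le_antisymm (fun x hx => ?_) hle
  obtain ⟨r, hxr⟩ := exists_sub_algebraMap_mem_spanRoots a d x
  have hr : r ∈ Ideal.span (Set.range a) := by
    rw [← Ideal.Quotient.eq_zero_iff_mem, ← augmentation_algebraMap a d hd,
      ← sub_sub_cancel x (algebraMap R _ r), map_sub, RingHom.mem_ker.mp hx, hle hxr, sub_zero]
  simpa using Ideal.add_mem _ hxr (map_span_le_spanRoots a d (Ideal.mem_map_of_mem _ hr))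

end EkaFamRing

/-- Eka local rings: if `R` is local with maximal ideal `m` generated by `(a_λ)` and residue
field `k = R/m`, then `S = ⋃_i R[a_λ^{1/d^i}]` is local with maximal ideal
`m' = (a_λ^{1/d^i})` and residue field `S/m' ≅ k`. -/
theorem ekaFamRing_isLocalRing
    (R : Type*) [CommRing R] [IsLocalRing R] {Λ : Type*} (a : Λ → R)
    (ha : Ideal.span (Set.range a) = IsLocalRing.maximalIdeal R)
    (d : ℕ) (hd : 2 ≤ d) :
    IsLocalRing (EkaFamRing R a d) ∧
      (Ideal.span (Set.range (ekaFamRoot R a d))).IsMaximal ∧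
      (∀ J : Ideal (EkaFamRing R a d), J.IsMaximal →
        J = Ideal.span (Set.range (ekaFamRoot R a d))) ∧
      Nonempty
        ((EkaFamRing R a d ⧸ Ideal.span (Set.range (ekaFamRoot R a d))) ≃+*
          IsLocalRing.ResidueField R) := by
  have hd0 : d ≠ 0 := by omega
  have : Algebra.IsIntegral R (EkaFamRing R a d) := EkaFamRing.isIntegral a d hd0
  let e : (EkaFamRing R a d ⧸ EkaFamRing.spanRoots a d) ≃+* IsLocalRing.ResidueField R :=
    (Ideal.quotEquivOfEq (EkaFamRing.ker_augmentation a d hd0).symm).trans <|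
      (RingHom.quotientKerEquivOfSurjective (EkaFamRing.augmentation_surjective a d hd0)).trans
        (Ideal.quotEquivOfEq ha)
  have hmax : (EkaFamRing.spanRoots a d).IsMaximal :=
    Ideal.Quotient.maximal_of_isField _ (e.toMulEquiv.isField (Field.toIsField _))
  have huniq (J : Ideal (EkaFamRing R a d)) (hJ : J.IsMaximal) : J = EkaFamRing.spanRoots a d := by
    refine (hmax.eq_of_le hJ.ne_top ?_).symm
    calc EkaFamRing.spanRoots a d
        ≤ ((IsLocalRing.maximalIdeal R).map (algebraMap R _)).radical :=
          ha ▸ EkaFamRing.spanRoots_le_radical_map a d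
      _ ≤ J := Ideal.radical_map_maximalIdeal_le J
  exact ⟨.of_unique_max_ideal ⟨_, hmax, huniq⟩, hmax, huniq, ⟨e⟩⟩
end

section
/- Let R be a commutative ring with prime ideal p generated by (a_λ)_{λ∈Λ}, with quotient domain D = R/p. Let S = ⋃_i R[a_λ^{1/d^i}] be obtained by adjoining compatible d-power roots of the generators, and p' the ideal of S generated by all a_λ^{1/d^i}. Then p' is a prime ideal of S and S/p' ≅ D. -/
open MvPolynomial

/-!
Modulo all the variables `x_{λ,i}`, the relations `x_{λ,i+1}^d - x_{λ,i}` vanish (as `d ≠ 0`) and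
`x_{λ,0} - a_λ` becomes `-a_λ`. So `S/p'` is the polynomial ring modulo `(a_λ) + (x_{λ,i})`, which
is the kernel of "evaluate at `0`, then reduce mod `p`"; hence `S/p' ≅ R/p`, a domain.
-/

namespace MvPolynomial

variable {R σ : Type*} [CommRing R]

theorem ker_eval₂Hom_mk_zero (I : Ideal R) :
    RingHom.ker (eval₂Hom (Ideal.Quotient.mk I) (fun _ : σ => 0)) =
      I.map C ⊔ idealOfVars σ R := by
  apply le_antisymm
  · intro f hf
    rw [RingHom.mem_ker, eval₂Hom_zero'_apply, Ideal.Quotient.eq_zero_iff_mem] at hf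
    have hvars : f - C (constantCoeff f) ∈ idealOfVars σ R := by
      rw [← pow_one (idealOfVars σ R), mem_pow_idealOfVars_iff']
      intro m hm
      rw [Nat.lt_one_iff, Finsupp.degree_eq_zero_iff] at hm
      simp [hm, coeff_sub, ← constantCoeff_eq]
    simpa using
      add_mem (Ideal.mem_sup_left (Ideal.mem_map_of_mem C hf)) (Ideal.mem_sup_right hvars)
  · refine sup_le ?_ (Ideal.span_le.mpr ?_)
    · rw [Ideal.map_le_iff_le_comap]
      intro r hr
      simpa [Ideal.Quotient.eq_zero_iff_mem] using hr
    · rintro _ ⟨i, rfl⟩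
      simp

end MvPolynomial

theorem ekaFamRelations_sup_idealOfVars (R : Type*) [CommRing R] {Λ : Type*} (a : Λ → R)
    {d : ℕ} (hd : d ≠ 0) :
    ekaFamRelations R a d ⊔ idealOfVars (Λ × ℕ) R =
      (Ideal.span (Set.range a)).map C ⊔ idealOfVars (Λ × ℕ) R := by
  have hX (li : Λ × ℕ) : X li ∈ idealOfVars (Λ × ℕ) R := Ideal.subset_span ⟨li, rfl⟩
  refine le_antisymm (sup_le (Ideal.span_le.mpr ?_) le_sup_right) (sup_le ?_ le_sup_right)
  · rintro _ (⟨lam, rfl⟩ | ⟨li, rfl⟩)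
    · have hCa : (C (a lam) : MvPolynomial (Λ × ℕ) R) ∈ (Ideal.span (Set.range a)).map C :=
        Ideal.mem_map_of_mem C (Ideal.subset_span ⟨lam, rfl⟩)
      exact sub_mem (Ideal.mem_sup_right (hX _)) (Ideal.mem_sup_left hCa)
    · exact Ideal.mem_sup_right
        (sub_mem (Ideal.pow_mem_of_mem _ (hX _) d (Nat.pos_of_ne_zero hd)) (hX li))
  · rw [Ideal.map_span, Ideal.span_le]
    rintro _ ⟨_, ⟨lam, rfl⟩, rfl⟩
    have hrel : X (lam, 0) - C (a lam) ∈ ekaFamRelations R a d :=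
      Ideal.subset_span (Or.inl ⟨lam, rfl⟩)
    simpa using sub_mem (Ideal.mem_sup_right (hX (lam, 0))) (Ideal.mem_sup_left hrel)

theorem span_range_ekaFamRoot (R : Type*) [CommRing R] {Λ : Type*} (a : Λ → R) (d : ℕ) :
    (Ideal.span (Set.range (ekaFamRoot R a d)) :
        Ideal (MvPolynomial (Λ × ℕ) R ⧸ ekaFamRelations R a d)) =
      (idealOfVars (Λ × ℕ) R).map (Ideal.Quotient.mk (ekaFamRelations R a d)) := by
  rw [Ideal.map_span, ← Set.range_comp]
  rfl

noncomputable def ekaFamRingQuotRootsEquiv (R : Type*) [CommRing R] {Λ : Type*} (a : Λ → R)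
    {d : ℕ} (hd : d ≠ 0) :
    EkaFamRing R a d ⧸ Ideal.span (Set.range (ekaFamRoot R a d)) ≃+*
      R ⧸ Ideal.span (Set.range a) :=
  have hsurj : Function.Surjective
      (eval₂Hom (Ideal.Quotient.mk (Ideal.span (Set.range a))) (fun _ : Λ × ℕ => 0)) :=
    fun y => by
      obtain ⟨r, rfl⟩ := Ideal.Quotient.mk_surjective y
      exact ⟨C r, by simp⟩
  (Ideal.quotEquivOfEq (span_range_ekaFamRoot R a d)).trans <|
    (DoubleQuot.quotQuotEquivQuotSup _ _).trans <|
    (Ideal.quotEquivOfEq ((ekaFamRelations_sup_idealOfVars R a hd).trans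
      (ker_eval₂Hom_mk_zero _).symm)).trans <|
    RingHom.quotientKerEquivOfSurjective hsurj

/-- Eka rings with prime ideals: if `p` is a prime ideal of `R` generated by `(a_λ)`, with
`D = R/p` the quotient domain, then in `S = ⋃_i R[a_λ^{1/d^i}]` the ideal
`p' = (a_λ^{1/d^i})` is prime and `S/p' ≅ D`. -/
theorem ekaFamRing_span_roots_isPrime
    (R : Type*) [CommRing R] {Λ : Type*} (a : Λ → R)
    (p : Ideal R) [p.IsPrime] (hp : Ideal.span (Set.range a) = p)
    (d : ℕ) (hd : 2 ≤ d) :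
    (Ideal.span (Set.range (ekaFamRoot R a d))).IsPrime ∧
      Nonempty
        ((EkaFamRing R a d ⧸ Ideal.span (Set.range (ekaFamRoot R a d))) ≃+* (R ⧸ p)) := by
  subst hp
  let e := ekaFamRingQuotRootsEquiv R a (d := d) (by omega)
  have : IsDomain (EkaFamRing R a d ⧸ Ideal.span (Set.range (ekaFamRoot R a d))) :=
    e.toMulEquiv.isDomain _
  exact ⟨(Ideal.Quotient.isDomain_iff_prime _).mp this, ⟨e⟩⟩
end

section
/- Let A be a Noetherian commutative ring and let A[T^{1/p^∞}] = ⋃_{i≥0} A[T^{1/p^i}] be the directed union of polynomial rings in a p^i-th root of a variable T (equivalently, the monoid algebra A[ℕ[1/p]]). Then every finitely generated ideal of A[T^{1/p^∞}] is finitely presented as a module; i.e., A[T^{1/p^∞}] is a coherent ring. -/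
open MvPolynomial

/-- The ring `A[T^{1/p^∞}] = ⋃_i A[T^{1/p^i}]`, presented as the quotient of a polynomial
ring on generators `T^{1/p^i}` by the relations `(T^{1/p^{i+1}})^p = T^{1/p^i}`. -/
def PerfPolyRing (A : Type*) [CommRing A] (p : ℕ) : Type _ :=
  MvPolynomial ℕ A ⧸
    Ideal.span (Set.range (fun i : ℕ => (X (i + 1) : MvPolynomial ℕ A) ^ p - X i))

noncomputable instance (A : Type*) [CommRing A] (p : ℕ) : CommRing (PerfPolyRing A p) :=
  Ideal.Quotient.commRing _

/-!
`A[T^{1/p^∞}]` is the increasing union of the stages `A[T^{1/p^n}] ≅ A[X]`, which are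
Noetherian. A finitely generated ideal `I` is generated by elements of some stage
`R_m`, so `I = J · A[T^{1/p^∞}]` for an ideal `J` of `R_m`, finitely presented since `R_m` is
Noetherian. If `A[T^{1/p^∞}]` is flat over `R_m`, then `I ≅ A[T^{1/p^∞}] ⊗_{R_m} J` is finitely
presented. Flatness holds because every finite family of elements lies in a stage `R_n`, `n ≥ m`,
and `R_n ≅ R_m[Y]/(Y^{p^{n-m}} - T^{1/p^m})` is free over `R_m`; the equational criterion
for flatness only looks at finitely many elements at a time.
-/

theorem Module.Flat.of_forall_exists_flat_submodule {R M : Type*} [CommRing R] [AddCommGroup M]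
    [Module R M]
    (h : ∀ {l : ℕ} (x : Fin l → M), ∃ N : Submodule R M, Module.Flat R N ∧ ∀ i, x i ∈ N) :
    Module.Flat R M := by
  refine Module.Flat.of_forall_isTrivialRelation fun {l f x} hfx => ?_
  obtain ⟨N, hN, hxN⟩ := h x
  have hrel : ∑ i, f i • (⟨x i, hxN i⟩ : N) = 0 := Subtype.ext (by simpa using hfx)
  obtain ⟨k, a, y, hy, ha⟩ := Module.Flat.isTrivialRelation_of_sum_smul_eq_zero hrel
  exact ⟨k, a, fun j => y j, fun i => by simpa using congr_arg Subtype.val (hy i), ha⟩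

open TensorProduct in
theorem Ideal.finitePresentation_map_of_flat {R S : Type*} [CommRing R] [CommRing S]
    {f : R →+* S} (hf : f.Flat) (J : Ideal R) [Module.FinitePresentation R J] :
    Module.FinitePresentation S (J.map f) := by
  algebraize [f]
  let θ : S ⊗[R] J →ₗ[S] S :=
    (AlgebraTensorModule.rid R S S).toLinearMap ∘ₗ J.subtype.baseChange S
  have hθ : Function.Injective θ :=
    (AlgebraTensorModule.rid R S S).injective.comp
      (Module.Flat.lTensor_preserves_injective_linearMap J.subtype J.injective_subtype)
  have hθ_tmul (s : S) (j : J) : θ (s ⊗ₜ j) = f j * s := by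
    simp [θ, Algebra.smul_def, RingHom.algebraMap_toAlgebra]
  have hrange : LinearMap.range θ = J.map f := by
    refine le_antisymm ?_
      (Ideal.map_le_iff_le_comap.mpr fun j hj => ⟨1 ⊗ₜ ⟨j, hj⟩, by simp [hθ_tmul]⟩)
    rintro _ ⟨w, rfl⟩
    induction w using TensorProduct.induction_on with
    | zero => simp
    | tmul s j => exact hθ_tmul s j ▸ Ideal.mul_mem_right _ _ (Ideal.mem_map_of_mem f j.2)
    | add w w' hw hw' => exact map_add θ w w' ▸ add_mem hw hw'
  exact .of_equiv ((LinearEquiv.ofInjective θ hθ).trans (LinearEquiv.ofEq _ _ hrange))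

theorem AdjoinRoot.aeval_root_X_pow_sub_C_X_surjective (A : Type*) [CommRing A] (d : ℕ) :
    Function.Surjective (Polynomial.aeval (R := A)
      (root (Polynomial.X ^ d - Polynomial.C Polynomial.X : Polynomial (Polynomial A)))) := by
  set g : Polynomial (Polynomial A) := Polynomial.X ^ d - Polynomial.C Polynomial.X
  have hof : ∀ c, Polynomial.aeval (root g) (Polynomial.expand A d c) = of g c := by
    suffices (Polynomial.aeval (root g)).comp (Polynomial.expand A d) =
        IsScalarTower.toAlgHom A (Polynomial A) (AdjoinRoot g) from DFunLike.congr_fun this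
    refine Polynomial.algHom_ext ?_
    have h := (mk_self : mk g g = 0)
    rw [map_sub, map_pow, mk_X, mk_C, sub_eq_zero] at h
    simpa [algebraMap_eq] using h
  intro y
  induction y using AdjoinRoot.induction_on with | ih q => ?_
  show mk g q ∈ (Polynomial.aeval (R := A) (root g)).range
  induction q using Polynomial.induction_on with
  | C c => exact ⟨Polynomial.expand A d c, by simp [hof]⟩
  | add q q' hq hq' => exact map_add (mk g) q q' ▸ add_mem hq hq'
  | monomial k c _ => exact ⟨Polynomial.expand A d c * Polynomial.X ^ (k + 1), by simp [hof]⟩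

namespace PerfPolyRing

variable (A : Type*) [CommRing A] (p : ℕ)

noncomputable instance : Algebra A (PerfPolyRing A p) :=
  inferInstanceAs (Algebra A (MvPolynomial ℕ A ⧸ Ideal.span _))

noncomputable def mk : MvPolynomial ℕ A →ₐ[A] PerfPolyRing A p :=
  Ideal.Quotient.mkₐ A _

variable {A p}

theorem mk_surjective : Function.Surjective (mk A p) := Ideal.Quotient.mkₐ_surjective A _

/-- The element `T^{1/p^i}`. -/
noncomputable def T (i : ℕ) : PerfPolyRing A p := mk A p (X i)

theorem T_succ_pow (i : ℕ) : (T (i + 1) : PerfPolyRing A p) ^ p = T i := by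
  rw [T, T, ← sub_eq_zero, ← map_pow, ← map_sub]
  exact Ideal.Quotient.eq_zero_iff_mem.mpr (Ideal.subset_span ⟨i, rfl⟩)

theorem T_pow_of_le {i n : ℕ} (h : i ≤ n) : (T n : PerfPolyRing A p) ^ p ^ (n - i) = T i := by
  induction n, h using Nat.le_induction with
  | base => simp
  | succ n hin ih => rw [Nat.sub_add_comm hin, pow_succ', pow_mul, T_succ_pow, ih]

variable (A p) in
/-- The stage `A[T^{1/p^n}]`, as the polynomial ring in `T^{1/p^n}`. -/
noncomputable def stage (n : ℕ) : Polynomial A →ₐ[A] PerfPolyRing A p :=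
  Polynomial.aeval (T n)

@[simp] theorem stage_X (n : ℕ) : stage A p n Polynomial.X = T n := Polynomial.aeval_X _

theorem stage_comp_expand {m n : ℕ} (h : m ≤ n) :
    (stage A p n).comp (Polynomial.expand A (p ^ (n - m))) = stage A p m :=
  Polynomial.algHom_ext (by simp [T_pow_of_le h])

theorem range_stage_mono {m n : ℕ} (h : m ≤ n) : (stage A p m).range ≤ (stage A p n).range := by
  rintro _ ⟨f, rfl⟩
  exact ⟨Polynomial.expand A (p ^ (n - m)) f, DFunLike.congr_fun (stage_comp_expand h) f⟩

theorem exists_mem_range_stage (s : PerfPolyRing A p) : ∃ n, s ∈ (stage A p n).range := by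
  obtain ⟨q, rfl⟩ := mk_surjective s
  induction q using MvPolynomial.induction_on with
  | C a => exact ⟨0, Polynomial.C a, by simp [stage]⟩
  | add f g hf hg =>
    obtain ⟨m, hm⟩ := hf
    obtain ⟨n, hn⟩ := hg
    exact ⟨max m n, map_add (mk A p) f g ▸
      add_mem (range_stage_mono (le_max_left m n) hm) (range_stage_mono (le_max_right m n) hn)⟩
  | mul_X f i hf =>
    obtain ⟨m, hm⟩ := hf
    refine ⟨max m i, map_mul (mk A p) f (X i) ▸ mul_mem (range_stage_mono (le_max_left m i) hm) ?_⟩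
    exact range_stage_mono (le_max_right m i) ⟨Polynomial.X, stage_X i⟩

theorem exists_forall_mem_range_stage {ι : Type*} [Finite ι] (x : ι → PerfPolyRing A p) (m : ℕ) :
    ∃ n, m ≤ n ∧ ∀ i, x i ∈ (stage A p n).range := by
  choose k hk using fun i => exists_mem_range_stage (x i)
  obtain ⟨K, hK⟩ := Finite.exists_le k
  exact ⟨max m K, le_max_left m K,
    fun i => range_stage_mono ((hK i).trans (le_max_right m K)) (hk i)⟩

variable (A) in
noncomputable def toAddMonoidAlgebra (hp : p ≠ 0) : PerfPolyRing A p →ₐ[A] AddMonoidAlgebra A ℚ :=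
  Ideal.Quotient.liftₐ _ (aeval fun i => AddMonoidAlgebra.single ((p : ℚ)⁻¹ ^ i) 1) fun _ ha =>
    (Ideal.span_le (I := RingHom.ker _)).mpr (Set.range_subset_iff.mpr fun i => by
      have : p • (p : ℚ)⁻¹ ^ (i + 1) = (p : ℚ)⁻¹ ^ i := by
        rw [nsmul_eq_mul, pow_succ', ← mul_assoc, mul_inv_cancel₀ (Nat.cast_ne_zero.mpr hp),
          one_mul]
      simp only [SetLike.mem_coe, RingHom.mem_ker, map_sub, map_pow, aeval_X,
        AddMonoidAlgebra.single_pow, one_pow, this, sub_self]) ha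

theorem toAddMonoidAlgebra_T (hp : p ≠ 0) (i : ℕ) :
    toAddMonoidAlgebra A hp (T i) = AddMonoidAlgebra.single ((p : ℚ)⁻¹ ^ i) 1 :=
  aeval_X _ i

theorem stage_injective (hp : p ≠ 0) (n : ℕ) : Function.Injective (stage A p n) := by
  -- Followed by `toAddMonoidAlgebra`, the stage is induced by the exponent map `k ↦ k / p ^ n`.
  set q : ℚ := (p : ℚ)⁻¹ ^ n
  have hq : q ≠ 0 := pow_ne_zero _ (inv_ne_zero (Nat.cast_ne_zero.mpr hp))
  let e : ℕ →+ ℚ := (AddMonoidHom.mulRight q).comp (Nat.castAddMonoidHom ℚ)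
  have he : Function.Injective e := fun a b hab =>
    Nat.cast_injective (mul_right_cancel₀ hq hab)
  have key : (toAddMonoidAlgebra A hp).comp (stage A p n) =
      (AddMonoidAlgebra.mapDomainAlgHom A A e).comp (Polynomial.toFinsuppIsoAlg A).toAlgHom :=
    Polynomial.algHom_ext (by simp [toAddMonoidAlgebra_T, e, q])
  refine Function.Injective.of_comp (f := toAddMonoidAlgebra A hp) ?_
  rw [← AlgHom.coe_comp, key]
  exact (AddMonoidAlgebra.mapDomain_injective he).comp (Polynomial.toFinsuppIsoAlg A).injective

-- Without this, instance synthesis compares the additive structures coming from `AddCommGroup`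
-- and from the `Algebra` instance by unfolding the quotient ring structure, and fails.
attribute [local irreducible] instCommRingPerfPolyRing in
theorem stage_flat (hp : p ≠ 0) (m : ℕ) : (stage A p m).toRingHom.Flat := by
  let _ : Algebra (Polynomial A) (PerfPolyRing A p) := (stage A p m).toRingHom.toAlgebra
  refine Module.Flat.of_forall_exists_flat_submodule fun x => ?_
  obtain ⟨n, hmn, hx⟩ := exists_forall_mem_range_stage x m
  set g : Polynomial (Polynomial A) := Polynomial.X ^ p ^ (n - m) - Polynomial.C Polynomial.X
  have hg : g.Monic := Polynomial.monic_X_pow_sub_C _ (pow_ne_zero _ hp)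
  have : Module.Free (Polynomial A) (AdjoinRoot g) := .of_basis (AdjoinRoot.powerBasis' hg).basis
  have hTn : Polynomial.aeval (T n : PerfPolyRing A p) g = 0 := by
    have hX : algebraMap (Polynomial A) (PerfPolyRing A p) Polynomial.X = T m := stage_X m
    simp [g, T_pow_of_le hmn, hX]
  let ρ : AdjoinRoot g →ₐ[Polynomial A] PerfPolyRing A p :=
    AdjoinRoot.liftAlgHom g (Algebra.ofId _ _) (T n) hTn
  have hρ : (ρ.restrictScalars A).comp (Polynomial.aeval (AdjoinRoot.root g)) = stage A p n :=
    Polynomial.algHom_ext (by simpa using AdjoinRoot.liftAlgHom_root _ _ _ hTn)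
  have hρ_inj : Function.Injective ρ :=
    Function.Injective.of_comp_right (g := Polynomial.aeval (AdjoinRoot.root g))
      (by simpa [← hρ] using stage_injective (A := A) hp n)
      (AdjoinRoot.aeval_root_X_pow_sub_C_X_surjective A _)
  refine ⟨LinearMap.range ρ.toLinearMap, .of_linearEquiv (LinearEquiv.ofInjective _ hρ_inj).symm,
    fun i => ?_⟩
  obtain ⟨f, hf⟩ := hx i
  exact ⟨Polynomial.aeval (AdjoinRoot.root g) f, (DFunLike.congr_fun hρ f).trans hf⟩

end PerfPolyRing

/-- If `A` is Noetherian, then `A[T^{1/p^∞}]` is a coherent ring: every finitely generated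
ideal is finitely presented as a module. -/
theorem perfPolyRing_coherent (A : Type*) [CommRing A] [IsNoetherianRing A]
    (p : ℕ) (hp : 2 ≤ p) :
    ∀ I : Ideal (PerfPolyRing A p), I.FG → Module.FinitePresentation (PerfPolyRing A p) I := by
  rintro I ⟨s, rfl⟩
  obtain ⟨m, -, hs⟩ := PerfPolyRing.exists_forall_mem_range_stage ((↑) : s → PerfPolyRing A p) 0
  choose f hf using hs
  have hspan : Ideal.span (s : Set (PerfPolyRing A p)) =
      (Ideal.span (Set.range f)).map (PerfPolyRing.stage A p m) := by
    rw [Ideal.map_span, ← Set.range_comp, show ⇑(PerfPolyRing.stage A p m) ∘ f = (↑) from funext hf,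
      Subtype.range_coe_subtype, Finset.setOfPred_mem]
  have : Module.FinitePresentation (Polynomial A) (Ideal.span (Set.range f)) :=
    Module.finitePresentation_of_finite _ _
  rw [hspan]
  exact Ideal.finitePresentation_map_of_flat (PerfPolyRing.stage_flat (by omega) m) _
end

section
/- Let A be a Noetherian commutative ring, a ∈ A, and let R = ⋃_i A[a^{1/p^i}] be the eka^p ring obtained by adjoining compatible p-power roots of a. Then the ring R[T^{1/p^∞}] = ⋃_i R[T^{1/p^i}] is coherent: every finitely generated ideal of R[T^{1/p^∞}] is finitely presented. -/
open MvPolynomial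

/-- The ring `R[T^{1/p^∞}]` where `R = ⋃_i A[a^{1/p^i}]` is the eka^p ring of `(A, a)`:
presented by generators `a^{1/p^i}` (indexed by `Sum.inl i`) and `T^{1/p^i}` (indexed by
`Sum.inr i`) with relations `a^{1/p^0} = a`, `(a^{1/p^{i+1}})^p = a^{1/p^i}` and
`(T^{1/p^{i+1}})^p = T^{1/p^i}`. -/
def EkaPerfPolyRing (A : Type*) [CommRing A] (a : A) (p : ℕ) : Type _ :=
  MvPolynomial (ℕ ⊕ ℕ) A ⧸
    Ideal.span
      ({(X (Sum.inl 0) : MvPolynomial (ℕ ⊕ ℕ) A) - C a} ∪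
        Set.range (fun i : ℕ =>
          (X (Sum.inl (i + 1)) : MvPolynomial (ℕ ⊕ ℕ) A) ^ p - X (Sum.inl i)) ∪
        Set.range (fun i : ℕ =>
          (X (Sum.inr (i + 1)) : MvPolynomial (ℕ ⊕ ℕ) A) ^ p - X (Sum.inr i)))

noncomputable instance (A : Type*) [CommRing A] (a : A) (p : ℕ) :
    CommRing (EkaPerfPolyRing A a p) :=
  Ideal.Quotient.commRing _


set_option maxHeartbeats 1000000
set_option synthInstance.maxHeartbeats 400000


/-! ### Generic lemmas -/

lemma injective_algebraMap_of_basis {B C : Type*} [CommRing B] [CommRing C] [Algebra B C]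
    {ι : Type*} [Nonempty ι] (b : Module.Basis ι B C) : Function.Injective (algebraMap B C) := by
  intro r s h
  obtain ⟨m⟩ := ‹Nonempty ι›
  have h2 : b.repr (r • b m) m = b.repr (s • b m) m := by
    rw [Algebra.smul_def, Algebra.smul_def, h]
  simpa using h2

lemma relation_descend {B C : Type*} [CommRing B] [CommRing C] [Algebra B C]
    {ι : Type*} [Fintype ι] (b : Module.Basis ι B C) {n : ℕ} (g : Fin n → B) (x : Fin n → C)
    (h : ∑ k, x k * algebraMap B C (g k) = 0) :
    x ∈ Submodule.span C ((fun v : Fin n → B => algebraMap B C ∘ v) ''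
      {v : Fin n → B | ∑ k, v k * g k = 0}) := by
  classical
  set α := algebraMap B C
  have hsmul : ∑ k, g k • x k = 0 := by
    rw [← h]; exact Finset.sum_congr rfl fun k _ => by
      rw [Algebra.smul_def, mul_comm]
  set v : ι → Fin n → B := fun m k => b.equivFun (x k) m with hv
  have hvrel : ∀ m, v m ∈ {v : Fin n → B | ∑ k, v k * g k = 0} := by
    intro m
    have : b.equivFun (∑ k, g k • x k) m = 0 := by rw [hsmul]; simp
    rw [map_sum] at this
    simpa [hv, mul_comm] using this
  have hx : x = ∑ m, b m • (α ∘ v m) := by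
    funext k
    have := (b.sum_equivFun (x k)).symm
    rw [Finset.sum_apply]
    calc x k = ∑ m, b.equivFun (x k) m • b m := this
    _ = ∑ m, (b m • (α ∘ v m)) k := by
        refine Finset.sum_congr rfl fun m _ => ?_
        simp only [Pi.smul_apply, Function.comp_apply, smul_eq_mul, Algebra.smul_def, hv]
        ring
  rw [hx]
  exact Submodule.sum_mem _ fun m _ =>
    Submodule.smul_mem _ _ (Submodule.subset_span ⟨v m, hvrel m, rfl⟩)

/-! ### The tower of stages -/

structure EkaStage (A : Type*) [CommRing A] where
  R : Type*
  ring : CommRing R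
  x : R
  y : R

attribute [instance] EkaStage.ring

namespace EkaAux

variable {A : Type*} [CommRing A]

noncomputable abbrev midPoly (p : ℕ) (S : EkaStage A) : Polynomial S.R := Polynomial.X ^ p - Polynomial.C S.x

noncomputable abbrev Mid (p : ℕ) (S : EkaStage A) := AdjoinRoot (midPoly p S)

noncomputable abbrev topPoly (p : ℕ) (S : EkaStage A) : Polynomial (Mid p S) :=
  Polynomial.X ^ p - Polynomial.C (AdjoinRoot.of (midPoly p S) S.y)

noncomputable def step (p : ℕ) (S : EkaStage A) : EkaStage A where
  R := AdjoinRoot (topPoly p S)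
  ring := inferInstance
  x := algebraMap (Mid p S) (AdjoinRoot (topPoly p S)) (AdjoinRoot.root (midPoly p S))
  y := AdjoinRoot.root _

noncomputable def St (a : A) (p : ℕ) : ℕ → EkaStage A
  | 0 => ⟨Polynomial A, inferInstance, Polynomial.C a, Polynomial.X⟩
  | (i + 1) => step p (St a p i)

variable (a : A) (p : ℕ)

/-- stage ring -/
noncomputable abbrev Stg (i : ℕ) := (St a p i).R

noncomputable instance stepAlgebra (i : ℕ) : Algebra (Stg a p i) (Stg a p (i + 1)) :=
  inferInstanceAs (Algebra (St a p i).R (AdjoinRoot (topPoly p (St a p i))))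

noncomputable instance midAlgebra (i : ℕ) : Algebra (Mid p (St a p i)) (Stg a p (i + 1)) :=
  inferInstanceAs (Algebra (Mid p (St a p i)) (AdjoinRoot (topPoly p (St a p i))))

instance stepTower (i : ℕ) :
    IsScalarTower (Stg a p i) (Mid p (St a p i)) (Stg a p (i + 1)) :=
  inferInstanceAs (IsScalarTower (St a p i).R (Mid p (St a p i))
    (AdjoinRoot (topPoly p (St a p i))))

noncomputable def tr (i : ℕ) : Stg a p i →+* Stg a p (i + 1) :=
  algebraMap _ _

instance stgNoetherian [IsNoetherianRing A] (i : ℕ) : IsNoetherianRing (Stg a p i) := by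
  induction i with
  | zero => exact inferInstanceAs (IsNoetherianRing (Polynomial A))
  | succ i ih =>
    exact inferInstanceAs (IsNoetherianRing (AdjoinRoot (topPoly p (St a p i))))

end EkaAux

namespace EkaAux
variable {A : Type*} [CommRing A] (a : A) (p : ℕ)

noncomputable abbrev sx (i : ℕ) : Stg a p i := (St a p i).x
noncomputable abbrev sy (i : ℕ) : Stg a p i := (St a p i).y

lemma root_pow_eq {R : Type*} [CommRing R] (p : ℕ) (c : R) :
    (AdjoinRoot.root (Polynomial.X ^ p - Polynomial.C c)) ^ p = AdjoinRoot.of _ c := by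
  have h := AdjoinRoot.mk_self (f := Polynomial.X ^ p - Polynomial.C c)
  rw [map_sub, map_pow, AdjoinRoot.mk_X, AdjoinRoot.mk_C, sub_eq_zero] at h
  exact h

lemma sx_succ_pow (i : ℕ) : sx a p (i + 1) ^ p = tr a p i (sx a p i) := by
  show (algebraMap (Mid p (St a p i)) (Stg a p (i + 1))
      (AdjoinRoot.root (midPoly p (St a p i)))) ^ p = _
  rw [← map_pow, root_pow_eq]
  rfl

lemma sy_succ_pow (i : ℕ) : sy a p (i + 1) ^ p = tr a p i (sy a p i) := by
  show (AdjoinRoot.root (topPoly p (St a p i))) ^ p = _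
  rw [root_pow_eq]
  rfl

lemma exists_stepBasis (hp : p ≠ 0) (i : ℕ) :
    ∃ (ι : Type) (_ : Fintype ι), Nonempty (Module.Basis ι (Stg a p i) (Stg a p (i + 1))) := by
  have hm1 : (midPoly p (St a p i)).Monic := Polynomial.monic_X_pow_sub_C _ hp
  have hm2 : (topPoly p (St a p i)).Monic := Polynomial.monic_X_pow_sub_C _ hp
  exact ⟨_, inferInstance,
    ⟨@Module.Basis.smulTower _ _ _ _ _ _ _ _ _ (stepTower a p i) _ _ (AdjoinRoot.powerBasisAux' hm1) (AdjoinRoot.powerBasisAux' hm2)⟩⟩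

lemma tr_injective (hp : p ≠ 0) (i : ℕ) : Function.Injective (tr a p i) := by
  by_cases hS : Subsingleton (Stg a p i)
  · exact fun x y _ => Subsingleton.elim x y
  · rw [not_subsingleton_iff_nontrivial] at hS
    have hm1 : (midPoly p (St a p i)).Monic := Polynomial.monic_X_pow_sub_C _ hp
    have hd1 : (midPoly p (St a p i)).natDegree = p := Polynomial.natDegree_X_pow_sub_C
    have hne1 : Nonempty (Fin (midPoly p (St a p i)).natDegree) :=
      ⟨⟨0, by rw [hd1]; exact Nat.pos_of_ne_zero hp⟩⟩
    have hinj1 : Function.Injective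
        (algebraMap (Stg a p i) (Mid p (St a p i))) :=
      injective_algebraMap_of_basis (AdjoinRoot.powerBasisAux' hm1)
    have hMid : Nontrivial (Mid p (St a p i)) := hinj1.nontrivial
    have hm2 : (topPoly p (St a p i)).Monic := Polynomial.monic_X_pow_sub_C _ hp
    have hd2 : (topPoly p (St a p i)).natDegree = p := Polynomial.natDegree_X_pow_sub_C
    have hne2 : Nonempty (Fin (topPoly p (St a p i)).natDegree) :=
      ⟨⟨0, by rw [hd2]; exact Nat.pos_of_ne_zero hp⟩⟩
    exact injective_algebraMap_of_basis
      (@Module.Basis.smulTower _ _ _ _ _ _ _ _ _ (stepTower a p i) _ _ (AdjoinRoot.powerBasisAux' hm1) (AdjoinRoot.powerBasisAux' hm2))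

noncomputable def trLE {i j : ℕ} (h : i ≤ j) : Stg a p i →+* Stg a p j :=
  Nat.leRecOn h (fun {k} f => (tr a p k).comp f) (RingHom.id _)

lemma trLE_self {i : ℕ} (c : Stg a p i) : trLE a p (le_refl i) c = c := by
  rw [trLE, Nat.leRecOn_self]; rfl

lemma trLE_succ {i j : ℕ} (h : i ≤ j) (h2 : i ≤ j + 1) (c : Stg a p i) :
    trLE a p h2 c = tr a p j (trLE a p h c) := by
  rw [trLE, trLE, Nat.leRecOn_succ h]; rfl

lemma trLE_trans {i j k : ℕ} (hij : i ≤ j) (hjk : j ≤ k) (c : Stg a p i) :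
    trLE a p hjk (trLE a p hij c) = trLE a p (hij.trans hjk) c := by
  induction k, hjk using Nat.le_induction with
  | base => rw [trLE_self]
  | succ k hjk ih =>
    rw [trLE_succ a p (hij.trans hjk) _ c, ← ih, trLE_succ a p hjk _ (trLE a p hij c)]

instance ekaDirectedSystem :
    DirectedSystem (fun i => Stg a p i) (fun i j h => (trLE a p h : Stg a p i →+* Stg a p j)) :=
  ⟨fun i x => trLE_self a p x, fun _ _ _ hij hjk x => trLE_trans a p hij hjk x⟩

lemma trLE_injective (hp : p ≠ 0) {i j : ℕ} (h : i ≤ j) :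
    Function.Injective (trLE a p h) := by
  induction j, h using Nat.le_induction with
  | base => intro x y hxy; rwa [trLE_self, trLE_self] at hxy
  | succ k hik ih =>
    intro x y hxy
    rw [trLE_succ a p hik, trLE_succ a p hik] at hxy
    exact ih (tr_injective a p hp k hxy)

end EkaAux

namespace EkaAux
open MvPolynomial
variable {A : Type*} [CommRing A] (a : A) (p : ℕ)

noncomputable def Qmk : MvPolynomial (ℕ ⊕ ℕ) A →+* EkaPerfPolyRing A a p :=
  Ideal.Quotient.mk _

lemma Qmk_rel {g : MvPolynomial (ℕ ⊕ ℕ) A}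
    (hg : g ∈ ({(X (Sum.inl 0) : MvPolynomial (ℕ ⊕ ℕ) A) - MvPolynomial.C a} ∪
        Set.range (fun i : ℕ =>
          (X (Sum.inl (i + 1)) : MvPolynomial (ℕ ⊕ ℕ) A) ^ p - X (Sum.inl i)) ∪
        Set.range (fun i : ℕ =>
          (X (Sum.inr (i + 1)) : MvPolynomial (ℕ ⊕ ℕ) A) ^ p - X (Sum.inr i)))) :
    Qmk a p g = 0 :=
  Ideal.Quotient.eq_zero_iff_mem.2 (Ideal.subset_span hg)

noncomputable def ξ (i : ℕ) : EkaPerfPolyRing A a p := Qmk a p (X (Sum.inl i))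
noncomputable def η (i : ℕ) : EkaPerfPolyRing A a p := Qmk a p (X (Sum.inr i))

lemma xi_zero : ξ a p 0 = Qmk a p (MvPolynomial.C a) := by
  have h := Qmk_rel a p (g := X (Sum.inl 0) - MvPolynomial.C a) (Or.inl (Or.inl rfl))
  rw [map_sub, sub_eq_zero] at h
  exact h

lemma xi_pow (i : ℕ) : ξ a p (i + 1) ^ p = ξ a p i := by
  have h := Qmk_rel a p (g := X (Sum.inl (i + 1)) ^ p - X (Sum.inl i))
    (Or.inl (Or.inr ⟨i, rfl⟩))
  rw [map_sub, map_pow, sub_eq_zero] at h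
  exact h

lemma eta_pow (i : ℕ) : η a p (i + 1) ^ p = η a p i := by
  have h := Qmk_rel a p (g := X (Sum.inr (i + 1)) ^ p - X (Sum.inr i))
    (Or.inr ⟨i, rfl⟩)
  rw [map_sub, map_pow, sub_eq_zero] at h
  exact h

/-- lift to the middle ring -/
lemma kappaMid_pf (i : ℕ) (f : Stg a p i →+* EkaPerfPolyRing A a p)
    (hx : f (sx a p i) = ξ a p i) :
    (midPoly p (St a p i)).eval₂ f (ξ a p (i + 1)) = 0 := by
  rw [Polynomial.eval₂_sub, Polynomial.eval₂_pow, Polynomial.eval₂_X, Polynomial.eval₂_C,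
    hx, xi_pow, sub_self]

noncomputable def kappaMidOf (i : ℕ) (f : Stg a p i →+* EkaPerfPolyRing A a p)
    (hx : f (sx a p i) = ξ a p i) : Mid p (St a p i) →+* EkaPerfPolyRing A a p :=
  AdjoinRoot.lift f (ξ a p (i + 1)) (kappaMid_pf a p i f hx)

lemma kappaMidOf_of (i : ℕ) (f : Stg a p i →+* EkaPerfPolyRing A a p) (hx) (z : Stg a p i) :
    kappaMidOf a p i f hx (AdjoinRoot.of (midPoly p (St a p i)) z) = f z :=
  AdjoinRoot.lift_of (h := kappaMid_pf a p i f hx)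

lemma kappaMidOf_root (i : ℕ) (f : Stg a p i →+* EkaPerfPolyRing A a p) (hx) :
    kappaMidOf a p i f hx (AdjoinRoot.root (midPoly p (St a p i))) = ξ a p (i + 1) :=
  AdjoinRoot.lift_root (h := kappaMid_pf a p i f hx)

lemma kappaStep_pf (i : ℕ) (f : Stg a p i →+* EkaPerfPolyRing A a p) (hx)
    (hy : f (sy a p i) = η a p i) :
    (topPoly p (St a p i)).eval₂ (kappaMidOf a p i f hx) (η a p (i + 1)) = 0 := by
  rw [Polynomial.eval₂_sub, Polynomial.eval₂_pow, Polynomial.eval₂_X, Polynomial.eval₂_C,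
    kappaMidOf_of, hy, eta_pow, sub_self]

noncomputable def kappaStepOf (i : ℕ) (f : Stg a p i →+* EkaPerfPolyRing A a p)
    (hx : f (sx a p i) = ξ a p i) (hy : f (sy a p i) = η a p i) :
    Stg a p (i + 1) →+* EkaPerfPolyRing A a p :=
  AdjoinRoot.lift (kappaMidOf a p i f hx) (η a p (i + 1)) (kappaStep_pf a p i f hx hy)

lemma kappaStepOf_of (i : ℕ) (f : Stg a p i →+* EkaPerfPolyRing A a p) (hx) (hy)
    (z : Mid p (St a p i)) :
    kappaStepOf a p i f hx hy (AdjoinRoot.of (topPoly p (St a p i)) z) =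
      kappaMidOf a p i f hx z :=
  AdjoinRoot.lift_of (h := kappaStep_pf a p i f hx hy)

lemma kappaStepOf_x (i : ℕ) (f : Stg a p i →+* EkaPerfPolyRing A a p) (hx) (hy) :
    kappaStepOf a p i f hx hy (sx a p (i + 1)) = ξ a p (i + 1) :=
  (kappaStepOf_of a p i f hx hy (AdjoinRoot.root (midPoly p (St a p i)))).trans
    (kappaMidOf_root a p i f hx)

lemma kappaStepOf_y (i : ℕ) (f : Stg a p i →+* EkaPerfPolyRing A a p) (hx) (hy) :
    kappaStepOf a p i f hx hy (sy a p (i + 1)) = η a p (i + 1) :=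
  AdjoinRoot.lift_root (h := kappaStep_pf a p i f hx hy)

lemma kappaStepOf_tr (i : ℕ) (f : Stg a p i →+* EkaPerfPolyRing A a p) (hx) (hy)
    (c : Stg a p i) : kappaStepOf a p i f hx hy (tr a p i c) = f c :=
  (kappaStepOf_of a p i f hx hy (AdjoinRoot.of (midPoly p (St a p i)) c)).trans
    (kappaMidOf_of a p i f hx c)

noncomputable def kappaZero : Stg a p 0 →+* EkaPerfPolyRing A a p :=
  Polynomial.eval₂RingHom ((Qmk a p).comp MvPolynomial.C) (η a p 0)

noncomputable def kappaAux : (i : ℕ) →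
    {f : Stg a p i →+* EkaPerfPolyRing A a p //
      f (sx a p i) = ξ a p i ∧ f (sy a p i) = η a p i}
  | 0 => ⟨kappaZero a p, by
      constructor
      · show Polynomial.eval₂ _ _ (Polynomial.C a) = _
        rw [Polynomial.eval₂_C, xi_zero]; rfl
      · show Polynomial.eval₂ _ _ Polynomial.X = _
        rw [Polynomial.eval₂_X]⟩
  | (i + 1) =>
    let κ := kappaAux i
    ⟨kappaStepOf a p i κ.1 κ.2.1 κ.2.2,
      kappaStepOf_x a p i κ.1 κ.2.1 κ.2.2, kappaStepOf_y a p i κ.1 κ.2.1 κ.2.2⟩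

noncomputable def kappa (i : ℕ) : Stg a p i →+* EkaPerfPolyRing A a p := (kappaAux a p i).1

lemma kappa_x (i : ℕ) : kappa a p i (sx a p i) = ξ a p i := (kappaAux a p i).2.1
lemma kappa_y (i : ℕ) : kappa a p i (sy a p i) = η a p i := (kappaAux a p i).2.2

lemma kappa_succ (i : ℕ) :
    kappa a p (i + 1) = kappaStepOf a p i (kappa a p i) (kappa_x a p i) (kappa_y a p i) := rfl

lemma kappa_tr (i : ℕ) (c : Stg a p i) : kappa a p (i + 1) (tr a p i c) = kappa a p i c := by
  rw [kappa_succ, kappaStepOf_tr]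

lemma kappa_trLE {i j : ℕ} (h : i ≤ j) (c : Stg a p i) :
    kappa a p j (trLE a p h c) = kappa a p i c := by
  induction j, h using Nat.le_induction with
  | base => rw [trLE_self]
  | succ k hik ih => rw [trLE_succ a p hik, kappa_tr, ih]

end EkaAux

namespace EkaAux
open MvPolynomial
variable {A : Type*} [CommRing A] (a : A) (p : ℕ)

noncomputable def trSys : ∀ i j : ℕ, i ≤ j → (Stg a p i →+* Stg a p j) :=
  fun _ _ h => trLE a p h

instance : DirectedSystem (fun i => Stg a p i) (fun i j h => trSys a p i j h) :=
  ⟨fun _ x => trLE_self a p x, fun _ _ _ hij hjk x => trLE_trans a p hij hjk x⟩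

noncomputable abbrev L :=
  Ring.DirectLimit (fun i => Stg a p i) (fun i j h => trSys a p i j h)

noncomputable def ofL (i : ℕ) : Stg a p i →+* L a p :=
  Ring.DirectLimit.of _ _ i

lemma ofL_tr (i : ℕ) (c : Stg a p i) : ofL a p (i + 1) (tr a p i c) = ofL a p i c := by
  have h2 : tr a p i c = trSys a p i (i + 1) (Nat.le_succ i) c := by
    show tr a p i c = trLE a p (Nat.le_succ i) c
    rw [trLE_succ a p (le_refl i), trLE_self]
  rw [h2]
  exact Ring.DirectLimit.of_f _ _

lemma ofL_injective (hp : p ≠ 0) (i : ℕ) : Function.Injective (ofL a p i) :=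
  Ring.DirectLimit.of_injective (f' := trSys a p)
    (fun _ _ hij => trLE_injective a p hp hij) i

noncomputable def psi : MvPolynomial (ℕ ⊕ ℕ) A →+* L a p :=
  MvPolynomial.eval₂Hom ((ofL a p 0).comp (Polynomial.C : A →+* Polynomial A))
    (Sum.elim (fun i => ofL a p i (sx a p i)) (fun i => ofL a p i (sy a p i)))

lemma psi_C (b : A) : psi a p (MvPolynomial.C b) = ofL a p 0 (Polynomial.C b) := by
  rw [psi, eval₂Hom_C]; rfl

lemma psi_X_inl (i : ℕ) : psi a p (X (Sum.inl i)) = ofL a p i (sx a p i) := by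
  rw [psi, eval₂Hom_X']; rfl

lemma psi_X_inr (i : ℕ) : psi a p (X (Sum.inr i)) = ofL a p i (sy a p i) := by
  rw [psi, eval₂Hom_X']; rfl

noncomputable def piL : EkaPerfPolyRing A a p →+* L a p :=
  Ideal.Quotient.lift _ (psi a p) (by
    intro g hg
    have hle : Ideal.span
        ({(X (Sum.inl 0) : MvPolynomial (ℕ ⊕ ℕ) A) - MvPolynomial.C a} ∪
          Set.range (fun i : ℕ =>
            (X (Sum.inl (i + 1)) : MvPolynomial (ℕ ⊕ ℕ) A) ^ p - X (Sum.inl i)) ∪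
          Set.range (fun i : ℕ =>
            (X (Sum.inr (i + 1)) : MvPolynomial (ℕ ⊕ ℕ) A) ^ p - X (Sum.inr i)))
        ≤ RingHom.ker (psi a p) := by
      rw [Ideal.span_le]
      rintro g ((h | ⟨i, rfl⟩) | ⟨i, rfl⟩)
      · rw [Set.mem_singleton_iff] at h
        subst h
        have : psi a p (X (Sum.inl 0) - MvPolynomial.C a) = 0 := by
          rw [map_sub, psi_X_inl, psi_C, sub_eq_zero]
          rfl
        exact this
      · show psi a p _ = 0
        rw [map_sub, map_pow, psi_X_inl, psi_X_inl, ← map_pow, sx_succ_pow, ofL_tr, sub_self]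
      · show psi a p _ = 0
        rw [map_sub, map_pow, psi_X_inr, psi_X_inr, ← map_pow, sy_succ_pow, ofL_tr, sub_self]
    exact hle hg)

lemma piL_Qmk (g : MvPolynomial (ℕ ⊕ ℕ) A) : piL a p (Qmk a p g) = psi a p g :=
  Ideal.Quotient.lift_mk _ _ _

end EkaAux

namespace EkaAux
open MvPolynomial
variable {A : Type*} [CommRing A] (a : A) (p : ℕ)

lemma piL_xi (i : ℕ) : piL a p (ξ a p i) = ofL a p i (sx a p i) := by
  rw [ξ, piL_Qmk, psi_X_inl]

lemma piL_eta (i : ℕ) : piL a p (η a p i) = ofL a p i (sy a p i) := by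
  rw [η, piL_Qmk, psi_X_inr]

lemma closure_step (i : ℕ) (z : Stg a p (i + 1)) :
    z ∈ Subring.closure
      (Set.range (tr a p i) ∪ {sx a p (i + 1), sy a p (i + 1)}) := by
  induction z using AdjoinRoot.induction_on with
  | ih P =>
    induction P using Polynomial.induction_on with
    | C m =>
      induction m using AdjoinRoot.induction_on with
      | ih P2 =>
        induction P2 using Polynomial.induction_on with
        | C c => exact Subring.subset_closure (Or.inl ⟨c, rfl⟩)
        | add P Q hP hQ =>
          have h : (AdjoinRoot.mk (topPoly p (St a p i)))
              (Polynomial.C ((AdjoinRoot.mk (midPoly p (St a p i))) (P + Q))) =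
              (AdjoinRoot.mk (topPoly p (St a p i)))
                (Polynomial.C ((AdjoinRoot.mk (midPoly p (St a p i))) P)) +
              (AdjoinRoot.mk (topPoly p (St a p i)))
                (Polynomial.C ((AdjoinRoot.mk (midPoly p (St a p i))) Q)) := by
            rw [map_add, map_add, map_add]
          rw [h]
          exact Subring.add_mem _ hP hQ
        | monomial n c hc =>
          have h : (AdjoinRoot.mk (topPoly p (St a p i)))
              (Polynomial.C ((AdjoinRoot.mk (midPoly p (St a p i)))
                (Polynomial.C c * Polynomial.X ^ (n + 1)))) =
              (AdjoinRoot.mk (topPoly p (St a p i)))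
                (Polynomial.C ((AdjoinRoot.mk (midPoly p (St a p i)))
                  (Polynomial.C c * Polynomial.X ^ n))) *
              (AdjoinRoot.mk (topPoly p (St a p i)))
                (Polynomial.C ((AdjoinRoot.mk (midPoly p (St a p i))) Polynomial.X)) := by
            rw [pow_succ, ← mul_assoc, map_mul, map_mul, map_mul]
          rw [h]
          exact Subring.mul_mem _ hc (Subring.subset_closure (Or.inr (Or.inl rfl)))
    | add P Q hP hQ =>
      have h : (AdjoinRoot.mk (topPoly p (St a p i))) (P + Q) =
          (AdjoinRoot.mk (topPoly p (St a p i))) P +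
          (AdjoinRoot.mk (topPoly p (St a p i))) Q := map_add _ _ _
      rw [h]
      exact Subring.add_mem _ hP hQ
    | monomial n m hm =>
      have h : (AdjoinRoot.mk (topPoly p (St a p i)))
          (Polynomial.C m * Polynomial.X ^ (n + 1)) =
          (AdjoinRoot.mk (topPoly p (St a p i))) (Polynomial.C m * Polynomial.X ^ n) *
          (AdjoinRoot.mk (topPoly p (St a p i))) Polynomial.X := by
        rw [pow_succ, ← mul_assoc, map_mul]
      rw [h]
      exact Subring.mul_mem _ hm (Subring.subset_closure (Or.inr (Or.inr rfl)))

lemma hom_ext_step {T : Type*} [CommRing T] (i : ℕ)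
    (F G : Stg a p (i + 1) →+* T)
    (htr : ∀ c, F (tr a p i c) = G (tr a p i c))
    (hx : F (sx a p (i + 1)) = G (sx a p (i + 1)))
    (hy : F (sy a p (i + 1)) = G (sy a p (i + 1))) : F = G := by
  ext z
  have h1 : Subring.closure
      (Set.range (tr a p i) ∪ {sx a p (i + 1), sy a p (i + 1)}) ≤ F.eqLocus G := by
    rw [Subring.closure_le]
    rintro w (⟨c, rfl⟩ | rfl | rfl)
    · exact htr c
    · exact hx
    · exact hy
  exact h1 (closure_step a p i z)

lemma piL_comp_kappa (i : ℕ) : (piL a p).comp (kappa a p i) = ofL a p i := by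
  induction i with
  | zero =>
    apply Polynomial.ringHom_ext'
    · ext b
      show piL a p (kappa a p 0 (Polynomial.C b)) = ofL a p 0 (Polynomial.C b)
      have h1 : kappa a p 0 (Polynomial.C b) = Qmk a p (MvPolynomial.C b) :=
        Polynomial.eval₂_C _ _
      rw [h1, piL_Qmk, psi_C]
    · show piL a p (kappa a p 0 Polynomial.X) = ofL a p 0 Polynomial.X
      have h2 : kappa a p 0 Polynomial.X = η a p 0 := Polynomial.eval₂_X _ _
      rw [h2, piL_eta]
      rfl
  | succ i ih =>
    apply hom_ext_step
    · intro c
      show piL a p (kappa a p (i + 1) (tr a p i c)) = ofL a p (i + 1) (tr a p i c)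
      rw [kappa_tr, ofL_tr]
      exact RingHom.congr_fun ih c
    · show piL a p (kappa a p (i + 1) (sx a p (i + 1))) = ofL a p (i + 1) (sx a p (i + 1))
      rw [kappa_x, piL_xi]
    · show piL a p (kappa a p (i + 1) (sy a p (i + 1))) = ofL a p (i + 1) (sy a p (i + 1))
      rw [kappa_y, piL_eta]

lemma kappa_injective (hp : p ≠ 0) (i : ℕ) : Function.Injective (kappa a p i) := by
  intro x y hxy
  apply ofL_injective a p hp i
  rw [← piL_comp_kappa a p i]
  show piL a p (kappa a p i x) = piL a p (kappa a p i y)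
  rw [hxy]

lemma exists_kappa (q : EkaPerfPolyRing A a p) : ∃ i c, kappa a p i c = q := by
  obtain ⟨P, rfl⟩ : ∃ P, Qmk a p P = q := Ideal.Quotient.mk_surjective q
  induction P using MvPolynomial.induction_on with
  | C b =>
    exact ⟨0, Polynomial.C b, Polynomial.eval₂_C _ _⟩
  | add P Q hP hQ =>
    obtain ⟨i, c, hc⟩ := hP
    obtain ⟨j, d, hd⟩ := hQ
    refine ⟨max i j, trLE a p (le_max_left i j) c + trLE a p (le_max_right i j) d, ?_⟩
    rw [map_add, kappa_trLE, kappa_trLE, hc, hd, map_add]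
  | mul_X P s hP =>
    obtain ⟨i, c, hc⟩ := hP
    cases s with
    | inl m =>
      refine ⟨max i m, trLE a p (le_max_left i m) c * trLE a p (le_max_right i m) (sx a p m), ?_⟩
      rw [map_mul, kappa_trLE, kappa_trLE, hc, kappa_x, map_mul]
      rfl
    | inr m =>
      refine ⟨max i m, trLE a p (le_max_left i m) c * trLE a p (le_max_right i m) (sy a p m), ?_⟩
      rw [map_mul, kappa_trLE, kappa_trLE, hc, kappa_y, map_mul]
      rfl

end EkaAux

namespace EkaAux
variable {A : Type*} [CommRing A] (a : A) (p : ℕ)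

noncomputable def combo {R : Type*} [CommRing R] {n : ℕ} (g : Fin n → R) :
    (Fin n → R) →ₗ[R] R where
  toFun v := ∑ k, v k * g k
  map_add' u v := by simp [add_mul, Finset.sum_add_distrib]
  map_smul' c v := by simp [Finset.mul_sum, mul_assoc]

lemma combo_apply {R : Type*} [CommRing R] {n : ℕ} (g v : Fin n → R) :
    combo g v = ∑ k, v k * g k := rfl

lemma map_span_le (i : ℕ) {n : ℕ} (E : Set (Fin n → Stg a p i)) (w : Fin n → Stg a p i)
    (hw : w ∈ Submodule.span (Stg a p i) E) :
    (fun k => kappa a p i (w k)) ∈ Submodule.span (EkaPerfPolyRing A a p)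
      ((fun w : Fin n → Stg a p i => fun k => kappa a p i (w k)) '' E) := by
  refine Submodule.span_induction
    (p := fun w _ => (fun k => kappa a p i (w k)) ∈ Submodule.span (EkaPerfPolyRing A a p)
      ((fun w : Fin n → Stg a p i => fun k => kappa a p i (w k)) '' E)) ?_ ?_ ?_ ?_ hw
  · intro u hu
    exact Submodule.subset_span ⟨u, hu, rfl⟩
  · have h0 : (fun k => kappa a p i ((0 : Fin n → Stg a p i) k)) = 0 :=
      funext fun k => map_zero _
    show (fun k => kappa a p i ((0 : Fin n → Stg a p i) k)) ∈ _
    rw [h0]; exact Submodule.zero_mem _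
  · intro u1 u2 _ _ h1 h2
    have hadd : (fun k => kappa a p i ((u1 + u2) k)) =
        (fun k => kappa a p i (u1 k)) + fun k => kappa a p i (u2 k) :=
      funext fun k => map_add _ _ _
    show (fun k => kappa a p i ((u1 + u2) k)) ∈ _
    rw [hadd]; exact Submodule.add_mem _ h1 h2
  · intro r u _ hu
    have hsmul : (fun k => kappa a p i ((r • u) k)) =
        kappa a p i r • fun k => kappa a p i (u k) :=
      funext fun k => map_mul _ _ _
    show (fun k => kappa a p i ((r • u) k)) ∈ _
    rw [hsmul]; exact Submodule.smul_mem _ _ hu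

lemma descend (hp : p ≠ 0) {n : ℕ} (i : ℕ) (g0 : Fin n → Stg a p i)
    (j : ℕ) (hij : i ≤ j) :
    ∀ v : Fin n → Stg a p j,
      (∑ k, v k * trLE a p hij (g0 k) = 0) →
      (fun k => kappa a p j (v k)) ∈ Submodule.span (EkaPerfPolyRing A a p)
        ((fun w : Fin n → Stg a p i => fun k => kappa a p i (w k)) ''
          {w : Fin n → Stg a p i | ∑ k, w k * g0 k = 0}) := by
  induction j, hij using Nat.le_induction with
  | base =>
    intro v hv
    refine Submodule.subset_span ⟨v, ?_, rfl⟩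
    show ∑ k, v k * g0 k = 0
    rw [← hv]
    exact Finset.sum_congr rfl fun k _ => by rw [trLE_self]
  | succ j hij ih =>
    intro v hv
    obtain ⟨ι, _, ⟨b⟩⟩ := exists_stepBasis a p hp j
    have hv' : ∑ k, v k * algebraMap (Stg a p j) (Stg a p (j + 1))
        (trLE a p hij (g0 k)) = 0 := by
      rw [← hv]
      exact Finset.sum_congr rfl fun k _ => by
        rw [trLE_succ a p hij (Nat.le_succ_of_le hij)]; rfl
    have hmem := relation_descend b (fun k => trLE a p hij (g0 k)) v hv'
    refine Submodule.span_induction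
      (p := fun u _ => (fun k => kappa a p (j + 1) (u k)) ∈
        Submodule.span (EkaPerfPolyRing A a p)
          ((fun w : Fin n → Stg a p i => fun k => kappa a p i (w k)) ''
            {w : Fin n → Stg a p i | ∑ k, w k * g0 k = 0})) ?_ ?_ ?_ ?_ hmem
    · rintro u ⟨w, hw, rfl⟩
      show (fun k => kappa a p (j + 1)
          ((algebraMap (Stg a p j) (Stg a p (j + 1)) ∘ w) k)) ∈ _
      have h2 : (fun k => kappa a p (j + 1)
          ((algebraMap (Stg a p j) (Stg a p (j + 1)) ∘ w) k)) =
          fun k => kappa a p j (w k) := funext fun k => kappa_tr a p j (w k)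
      rw [h2]
      exact ih w hw
    · have h0 : (fun k => kappa a p (j + 1) ((0 : Fin n → Stg a p (j + 1)) k)) = 0 :=
        funext fun k => map_zero _
      show (fun k => kappa a p (j + 1) ((0 : Fin n → Stg a p (j + 1)) k)) ∈ _
      rw [h0]; exact Submodule.zero_mem _
    · intro u1 u2 _ _ h1 h2
      have hadd : (fun k => kappa a p (j + 1) ((u1 + u2) k)) =
          (fun k => kappa a p (j + 1) (u1 k)) + fun k => kappa a p (j + 1) (u2 k) :=
        funext fun k => map_add _ _ _
      show (fun k => kappa a p (j + 1) ((u1 + u2) k)) ∈ _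
      rw [hadd]; exact Submodule.add_mem _ h1 h2
    · intro r u _ hu
      have hsmul : (fun k => kappa a p (j + 1) ((r • u) k)) =
          kappa a p (j + 1) r • fun k => kappa a p (j + 1) (u k) :=
        funext fun k => map_mul _ _ _
      show (fun k => kappa a p (j + 1) ((r • u) k)) ∈ _
      rw [hsmul]; exact Submodule.smul_mem _ _ hu

lemma ker_combo_fg [IsNoetherianRing A] (hp : p ≠ 0) {n : ℕ} (i : ℕ)
    (g0 : Fin n → Stg a p i) :
    (LinearMap.ker (combo (fun k => kappa a p i (g0 k)))).FG := by
  classical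
  obtain ⟨T, hT⟩ : (LinearMap.ker (combo g0)).FG := IsNoetherian.noetherian _
  refine ⟨T.image (fun w k => kappa a p i (w k)), le_antisymm ?_ ?_⟩
  · rw [Finset.coe_image, Submodule.span_le]
    rintro u ⟨w, hwT, rfl⟩
    have hw : ∑ k, w k * g0 k = 0 := by
      have hmem : w ∈ LinearMap.ker (combo g0) := by
        rw [← hT]; exact Submodule.subset_span hwT
      simpa [combo_apply] using hmem
    show combo _ _ = 0
    rw [combo_apply, ← map_zero (kappa a p i), ← hw, map_sum]
    exact Finset.sum_congr rfl fun k _ => (map_mul _ _ _).symm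
  · intro v hv
    have hv0 : ∑ k, v k * kappa a p i (g0 k) = 0 := by
      simpa [combo_apply] using hv
    choose m c hc using fun k => exists_kappa a p (v k)
    set j := max i (Finset.univ.sup m) with hj
    have hijle : i ≤ j := le_max_left _ _
    set v' : Fin n → Stg a p j := fun k =>
      trLE a p ((Finset.le_sup (Finset.mem_univ k)).trans (le_max_right i _)) (c k) with hv'
    have hvv : ∀ k, kappa a p j (v' k) = v k := fun k => by
      rw [hv']; rw [kappa_trLE]; exact hc k
    have hrel : ∑ k, v' k * trLE a p hijle (g0 k) = 0 := by
      apply kappa_injective a p hp j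
      rw [map_zero, map_sum]
      rw [← hv0]
      exact Finset.sum_congr rfl fun k _ => by
        rw [map_mul, hvv, kappa_trLE]
    have hd := descend a p hp i g0 j hijle v' hrel
    have hveq : (fun k => kappa a p j (v' k)) = v := funext hvv
    rw [hveq] at hd
    rw [Finset.coe_image]
    -- now reduce span of full relation set to span of T-image
    refine Submodule.span_le.2 ?_ hd
    rintro u ⟨w, hw, rfl⟩
    have hwker : w ∈ Submodule.span (Stg a p i) (↑T : Set (Fin n → Stg a p i)) := by
      rw [hT]
      show combo g0 w = 0
      rw [combo_apply]; exact hw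
    exact map_span_le a p i _ w hwker

end EkaAux

/-- If `A` is Noetherian and `R = ⋃_i A[a^{1/p^i}]` is the eka^p ring obtained by adjoining
compatible `p`-power roots of `a ∈ A`, then `R[T^{1/p^∞}]` is coherent: every finitely
generated ideal is finitely presented. -/
theorem ekaPerfPolyRing_coherent (A : Type*) [CommRing A] [IsNoetherianRing A]
    (a : A) (p : ℕ) (hp : 2 ≤ p) :
    ∀ I : Ideal (EkaPerfPolyRing A a p), I.FG →
      Module.FinitePresentation (EkaPerfPolyRing A a p) I := by
  classical
  intro I hI
  have hp0 : p ≠ 0 := by omega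
  obtain ⟨S, hS⟩ := hI
  set n := S.card with hn
  set g : Fin n → EkaPerfPolyRing A a p := fun k => ((S.equivFin.symm k : S) : _) with hg
  have hrange : Set.range g = (↑S : Set (EkaPerfPolyRing A a p)) := by
    ext z
    constructor
    · rintro ⟨k, rfl⟩; exact (S.equivFin.symm k).2
    · intro hz; exact ⟨S.equivFin ⟨z, hz⟩, by simp [hg]⟩
  choose m c hc using fun k => EkaAux.exists_kappa a p (g k)
  set i := Finset.univ.sup m with hi
  set g0 : Fin n → EkaAux.Stg a p i := fun k =>
    EkaAux.trLE a p (Finset.le_sup (Finset.mem_univ k)) (c k) with hg0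
  have hkg : ∀ k, EkaAux.kappa a p i (g0 k) = g k := fun k => by
    rw [hg0, EkaAux.kappa_trLE]; exact hc k
  have hgeq : g = fun k => EkaAux.kappa a p i (g0 k) := funext fun k => (hkg k).symm
  have hgI : ∀ k, g k ∈ I := by
    intro k
    rw [← hS]
    exact Ideal.subset_span (by rw [← hrange]; exact ⟨k, rfl⟩)
  have hmemI : ∀ v, EkaAux.combo g v ∈ I := by
    intro v
    rw [EkaAux.combo_apply]
    exact Submodule.sum_mem _ fun k _ => I.mul_mem_left _ (hgI k)
  set f : (Fin n → EkaPerfPolyRing A a p) →ₗ[EkaPerfPolyRing A a p] I :=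
    (EkaAux.combo g).codRestrict I hmemI with hf
  have hsurj : Function.Surjective f := by
    rintro ⟨z, hz⟩
    rw [← hS] at hz
    have hz' : z ∈ Submodule.span (EkaPerfPolyRing A a p) (Set.range g) := by
      rw [hrange]; exact hz
    obtain ⟨v, hv⟩ := Submodule.mem_span_range_iff_exists_fun _ |>.1 hz'
    refine ⟨v, Subtype.ext ?_⟩
    show EkaAux.combo g v = z
    rw [EkaAux.combo_apply, ← hv]
    exact Finset.sum_congr rfl fun k _ => (smul_eq_mul _ _).symm
  have hker : (LinearMap.ker f).FG := by
    rw [hf, LinearMap.ker_codRestrict, hgeq]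
    exact EkaAux.ker_combo_fg a p hp0 i g0
  exact Module.finitePresentation_of_surjective f hsurj hker
end

section
/- A filtered colimit (directed union) of coherent rings along flat ring maps, such that every finitely generated ideal of the colimit is extended from some stage, is coherent. In particular, if (B_i) is a directed system of Noetherian rings with injective flat transition maps and B = colim B_i such that every finite subset of B lies in the image of some B_i and each B_i → B is flat, then B is coherent. -/
/-!
A finitely generated ideal `I` of `B` has its finitely many generators in the image of a single
stage `B i`, so `I = J B` for the ideal `J ⊆ B i` they generate. As `B i` is Noetherian, `J` is
finitely presented, and by flatness of `B i → B` the extension `J B` is the base change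
`B ⊗[B i] J`, which is again finitely presented.
-/

open TensorProduct

namespace Ideal

variable {R S : Type*} [CommRing R] [CommRing S]

section Algebra

variable [Algebra R S]

theorem range_rid_comp_lTensor_subtype (J : Ideal R) :
    LinearMap.range ((AlgebraTensorModule.rid R S S).toLinearMap ∘ₗ
      AlgebraTensorModule.lTensor S S J.subtype) = (J.map (algebraMap R S)).restrictScalars S := by
  apply le_antisymm
  · rintro _ ⟨x, rfl⟩
    induction x with
    | zero => simp
    | add x y hx hy => rw [map_add]; exact add_mem hx hy
    | tmul s a =>
      simpa [Algebra.smul_def, mul_comm] using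
        (J.map (algebraMap R S)).mul_mem_left s (mem_map_of_mem _ a.2)
  · show J.map (algebraMap R S) ≤ _
    rw [map_le_iff_le_comap]
    intro a ha
    exact ⟨1 ⊗ₜ ⟨a, ha⟩, by simp [Algebra.smul_def]⟩

noncomputable def tensorEquivMapOfFlat [Module.Flat R S] (J : Ideal R) :
    S ⊗[R] J ≃ₗ[S] J.map (algebraMap R S) :=
  LinearEquiv.ofInjective _
      ((AlgebraTensorModule.rid R S S).injective.comp
        (Module.Flat.lTensor_preserves_injective_linearMap J.subtype J.injective_subtype)) ≪≫ₗ
    LinearEquiv.ofEq _ _ (range_rid_comp_lTensor_subtype J)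

theorem finitePresentation_map_algebraMap_of_flat [Module.Flat R S] (J : Ideal R)
    [Module.FinitePresentation R J] : Module.FinitePresentation S (J.map (algebraMap R S)) :=
  .of_equiv (tensorEquivMapOfFlat J)

end Algebra

theorem finitePresentation_map_of_flat_s9 {φ : R →+* S} (hφ : φ.Flat) (J : Ideal R)
    [Module.FinitePresentation R J] : Module.FinitePresentation S (J.map φ) := by
  algebraize [φ]
  exact finitePresentation_map_algebraMap_of_flat J

theorem map_span_preimage_of_subset_range (φ : R →+* S) {s : Set S}
    (hs : s ⊆ Set.range φ) : (span (φ ⁻¹' s)).map φ = span s := by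
  rw [map_span, Set.image_preimage_eq_of_subset hs]

end Ideal

theorem exists_map_eq_of_fg_of_monotone_range {ι : Type*} [Preorder ι] [IsDirected ι (· ≤ ·)]
    [Nonempty ι] {A : ι → Type*} [∀ i, CommRing (A i)] {B : Type*} [CommRing B]
    (g : ∀ i, A i →+* B) (hmono : Monotone fun i ↦ Set.range (g i))
    (hexh : ∀ b : B, ∃ i, b ∈ Set.range (g i)) {I : Ideal B} (hI : I.FG) :
    ∃ i, ∃ J : Ideal (A i), J.map (g i) = I := by
  obtain ⟨s, rfl⟩ := hI
  obtain ⟨i, hi⟩ := hmono.directed_le.exists_mem_subset_of_finset_subset_biUnion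
    (s := s) fun b _ ↦ Set.mem_iUnion.mpr (hexh b)
  exact ⟨i, _, Ideal.map_span_preimage_of_subset_range (g i) hi⟩

theorem coherent_of_directed_colimit_of_noetherian_general
    (ι : Type*) [Preorder ι] [IsDirected ι (· ≤ ·)] [Nonempty ι]
    (Bsys : ι → Type*) [∀ i, CommRing (Bsys i)] [∀ i, IsNoetherianRing (Bsys i)]
    (f : ∀ i j, i ≤ j → Bsys i →+* Bsys j)
    (B : Type*) [CommRing B]
    (g : ∀ i, Bsys i →+* B)
    (hcomp : ∀ i j (h : i ≤ j), (g j).comp (f i j h) = g i)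
    (hexh : ∀ b : B, ∃ i, b ∈ Set.range (g i))
    (hflat : ∀ i, (g i).Flat) :
    ∀ I : Ideal B, I.FG → Module.FinitePresentation B I := by
  intro I hI
  have hmono : Monotone fun i ↦ Set.range (g i) := fun i j hij ↦ by
    simpa only [← hcomp i j hij, RingHom.coe_comp] using Set.range_comp_subset_range _ _
  obtain ⟨i, J, rfl⟩ := exists_map_eq_of_fg_of_monotone_range g hmono hexh hI
  have : Module.FinitePresentation (Bsys i) J := Module.finitePresentation_of_finite _ _
  exact J.finitePresentation_map_of_flat_s9 (hflat i)

/-- A directed union of Noetherian rings with injective transition maps, such that every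
element of the colimit comes from some stage and each canonical map to the colimit is flat,
is a coherent ring: every finitely generated ideal is finitely presented. -/
theorem coherent_of_directed_colimit_of_noetherian
    (ι : Type*) [Preorder ι] [IsDirected ι (· ≤ ·)] [Nonempty ι]
    (Bsys : ι → Type*) [∀ i, CommRing (Bsys i)] [∀ i, IsNoetherianRing (Bsys i)]
    (f : ∀ i j, i ≤ j → Bsys i →+* Bsys j)
    (hinj : ∀ i j (h : i ≤ j), Function.Injective (f i j h))
    (B : Type*) [CommRing B]
    (g : ∀ i, Bsys i →+* B)
    (hcomp : ∀ i j (h : i ≤ j), (g j).comp (f i j h) = g i)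
    (hexh : ∀ b : B, ∃ i, b ∈ Set.range (g i))
    (hflat : ∀ i, (g i).Flat) :
    ∀ I : Ideal B, I.FG → Module.FinitePresentation B I :=
  coherent_of_directed_colimit_of_noetherian_general ι Bsys f B g hcomp hexh hflat
end

section
/- Let R be a commutative ring, π ∈ R, and let A be an R-algebra which is π-adically complete and separated. Let M be a finitely generated A-module which is flat over R, and suppose M/πM is a finitely presented A/πA-module. Then M is a finitely presented A-module. -/
open TensorProduct
open Pointwise

private lemma torsion_lift {R : Type*} [CommRing R] (π : R)
    {M : Type*} [AddCommGroup M] [Module R M] [Module.Flat R M]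
    {P : Type*} [AddCommGroup P] [Module R P]
    (f : P →ₗ[R] M) (hf : Function.Surjective f)
    {m : M} (hm : π • m = 0) :
    ∃ p₀ : P, π • p₀ = 0 ∧ f p₀ = m := by
  set J : Ideal R := LinearMap.ker (LinearMap.toSpanSingleton R R π) with hJ
  have hle : J ≤ LinearMap.ker (LinearMap.toSpanSingleton R R π) := le_rfl
  set μ : (R ⧸ J) →ₗ[R] R := Submodule.liftQ J (LinearMap.toSpanSingleton R R π) hle with hμdef
  have hμ : Function.Injective μ := by
    rw [← LinearMap.ker_eq_bot, hμdef]
    exact Submodule.ker_liftQ_eq_bot _ _ _ le_rfl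
  have hinj := Module.Flat.rTensor_preserves_injective_linearMap (M := M) μ hμ
  have h0 : ((Submodule.Quotient.mk (1:R) : R ⧸ J) ⊗ₜ[R] m) = 0 := by
    apply hinj
    rw [map_zero, LinearMap.rTensor_tmul]
    have h1 : μ (Submodule.Quotient.mk 1) = π := by
      rw [hμdef, Submodule.liftQ_apply, LinearMap.toSpanSingleton_apply, one_smul]
    rw [h1]
    calc π ⊗ₜ[R] m = (1:R) ⊗ₜ[R] (π • m) := by
          rw [TensorProduct.tmul_smul, TensorProduct.smul_tmul', smul_eq_mul, mul_one]
      _ = 0 := by rw [hm, TensorProduct.tmul_zero]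
  have hmem : m ∈ (J • ⊤ : Submodule R M) := by
    have h3 := congrArg (TensorProduct.quotTensorEquivQuotSMul M J) h0
    rw [map_zero] at h3
    rw [show (Submodule.Quotient.mk (1:R) : R ⧸ J) = Ideal.Quotient.mk J 1 from rfl] at h3
    rw [TensorProduct.quotTensorEquivQuotSMul_mk_tmul, one_smul] at h3
    exact (Submodule.Quotient.mk_eq_zero _).mp h3
  have hsub : (J • ⊤ : Submodule R M) ≤
      Submodule.map f (LinearMap.ker (π • (LinearMap.id : P →ₗ[R] P))) := by
    refine Submodule.smul_le.mpr fun r hr x _ => ?_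
    obtain ⟨p, rfl⟩ := hf x
    refine ⟨r • p, ?_, map_smul f r p⟩
    have hrπ : r • π = 0 := hr
    simp only [SetLike.mem_coe, LinearMap.mem_ker, LinearMap.smul_apply, LinearMap.id_apply]
    rw [smul_smul, mul_comm, ← smul_eq_mul, hrπ, zero_smul]
  obtain ⟨p₀, hp₀, hp₀'⟩ := hsub hmem
  refine ⟨p₀, ?_, hp₀'⟩
  have := hp₀
  simpa only [SetLike.mem_coe, LinearMap.mem_ker, LinearMap.smul_apply,
    LinearMap.id_apply] using this


private lemma key_haus {A : Type*} [CommRing A] (I : Ideal A) [IsHausdorff I A]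
    {s : ℕ} : IsHausdorff I (Fin s → A) := by
  constructor
  intro x hx
  funext i
  refine IsHausdorff.haus (inferInstance : IsHausdorff I A) (x i) fun n => ?_
  rw [SModEq.zero]
  have h1 : x i ∈ (I ^ n • (⊤ : Submodule A (Fin s → A))).map (LinearMap.proj i) :=
    ⟨x, (SModEq.zero).mp (hx n), rfl⟩
  rw [Submodule.map_smul''] at h1
  exact Submodule.smul_mono le_rfl le_top h1

private lemma key_descent {A : Type*} [CommRing A] (ϖ : A)
    [IsAdicComplete (Ideal.span {ϖ}) A] {s : ℕ}
    (K : Submodule A (Fin s → A)) {ι : Type*} [Fintype ι]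
    (v : ι → Fin s → A) (hv : ∀ i, v i ∈ K)
    (hK : K ≤ Submodule.span A (Set.range v) ⊔ ϖ • K) :
    K ≤ Submodule.span A (Set.range v) := by
  set I : Ideal A := Ideal.span {ϖ} with hIdef
  have hsmul_top : ∀ n : ℕ, (I ^ n • (⊤ : Submodule A A)) = I ^ n := by
    intro n; rw [smul_eq_mul, Ideal.mul_top]
  intro k hk
  have step : ∀ x : K, ∃ (c : ι → A) (y : K),
      (x : Fin s → A) = (∑ i, c i • v i) + ϖ • (y : Fin s → A) := by
    intro x
    obtain ⟨u, hu, w, hw, huw⟩ := Submodule.mem_sup.mp (hK x.2)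
    obtain ⟨c, hc⟩ := Submodule.mem_span_range_iff_exists_fun A |>.mp hu
    have hw' : w ∈ ϖ • (K : Set (Fin s → A)) := by
      rw [← Submodule.coe_pointwise_smul]; exact hw
    obtain ⟨y, hy, hyw⟩ := Set.mem_smul_set.mp hw'
    exact ⟨c, ⟨y, hy⟩, by rw [← huw, hc, hyw]⟩
  choose c y hcy using step
  obtain ⟨seq, hseq0, hseq⟩ : ∃ seq : ℕ → K, seq 0 = ⟨k, hk⟩ ∧ ∀ m, seq (m + 1) = y (seq m) :=
    ⟨fun m => Nat.recAux ⟨k, hk⟩ (fun _ x => y x) m, rfl, fun _ => rfl⟩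
  let a : ℕ → ι → A := fun m i => ∑ j ∈ Finset.range m, ϖ ^ j * c (seq j) i
  have key : ∀ m, k = (∑ i, a m i • v i) + ϖ ^ m • (seq m).1 := by
    intro m
    induction m with
    | zero => simp [a, hseq0]
    | succ m ih =>
      rw [ih, hcy (seq m), hseq]
      rw [smul_add, smul_smul, ← pow_succ, Finset.smul_sum]
      rw [← add_assoc, ← Finset.sum_add_distrib]
      congr 1
      refine Finset.sum_congr rfl fun i _ => ?_
      have ha : a (m + 1) i = a m i + ϖ ^ m * c (seq m) i := by
        simp [a, Finset.sum_range_succ]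
      rw [ha, add_smul, smul_smul]
  -- Cauchy property of coefficients
  have hcauchy : ∀ i : ι, ∀ {m n : ℕ}, m ≤ n →
      a m i ≡ a n i [SMOD (I ^ m • (⊤ : Submodule A A))] := by
    intro i m n hmn
    rw [SModEq.sub_mem, hsmul_top]
    have : a n i - a m i = ∑ j ∈ Finset.Ico m n, ϖ ^ j * c (seq j) i := by
      rw [Finset.sum_Ico_eq_sub _ hmn]
    rw [← neg_sub, this]
    refine neg_mem (Submodule.sum_mem _ fun j hj => ?_)
    rw [hIdef, Ideal.span_singleton_pow, Ideal.mem_span_singleton]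
    exact Dvd.dvd.mul_right (pow_dvd_pow ϖ (Finset.mem_Ico.mp hj).1) _
  have hprec : ∀ i : ι, ∃ L : A, ∀ n, a n i ≡ L [SMOD (I ^ n • (⊤ : Submodule A A))] := by
    intro i
    exact IsPrecomplete.prec (IsAdicComplete.toIsPrecomplete) (fun hmn => hcauchy i hmn)
  choose L hL using hprec
  have hlim : ∀ m : ℕ, k - ∑ i, L i • v i ∈ (I ^ m • (⊤ : Submodule A (Fin s → A))) := by
    intro m
    have h1 : k - ∑ i, L i • v i
        = (∑ i, (a m i - L i) • v i) + ϖ ^ m • (seq m).1 := by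
      rw [key m, add_sub_right_comm, ← Finset.sum_sub_distrib]
      congr 1
      exact Finset.sum_congr rfl fun i _ => (sub_smul _ _ _).symm
    rw [h1]
    refine Submodule.add_mem _ (Submodule.sum_mem _ fun i _ => ?_) ?_
    · refine Submodule.smul_mem_smul ?_ Submodule.mem_top
      have := (hL i m).symm
      rw [SModEq.sub_mem, hsmul_top] at this
      rwa [← neg_sub, neg_mem_iff] at this
    · refine Submodule.smul_mem_smul ?_ Submodule.mem_top
      rw [hIdef, Ideal.span_singleton_pow]
      exact Ideal.mem_span_singleton_self _
  have hzero : k - ∑ i, L i • v i = 0 := by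
    haveI : IsHausdorff I (Fin s → A) := key_haus I
    refine IsHausdorff.haus this _ fun m => ?_
    rw [SModEq.zero]; exact hlim m
  have : k = ∑ i, L i • v i := by rwa [sub_eq_zero] at hzero
  rw [this]
  exact Submodule.sum_mem _ fun i _ =>
    Submodule.smul_mem _ _ (Submodule.subset_span ⟨i, rfl⟩)


private lemma mod_step {A : Type*} [CommRing A] (ϖ : A) {M : Type*} [AddCommGroup M]
    [Module A M]
    (hmod : Module.FinitePresentation (A ⧸ Ideal.span {ϖ}) ((A ⧸ Ideal.span {ϖ}) ⊗[A] M))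
    {s : ℕ} (f : (Fin s → A) →ₗ[A] M) (hf : Function.Surjective f) :
    ∃ T : Finset (Fin s → A), (∀ t ∈ T, t ∈ LinearMap.ker f) ∧
      LinearMap.ker f ≤ Submodule.span A (T : Set (Fin s → A)) ⊔
        ϖ • (⊤ : Submodule A (Fin s → A)) := by
  classical
  set I : Ideal A := Ideal.span {ϖ} with hIdef
  haveI : Module.FinitePresentation (A ⧸ I) ((A ⧸ I) ⊗[A] M) := hmod
  -- the map q : Aˢ → (A/I)ˢ
  set q : (Fin s → A) →ₗ[A] (Fin s → A ⧸ I) :=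
    LinearMap.pi (fun i => (Algebra.linearMap A (A ⧸ I)).comp (LinearMap.proj i)) with hqdef
  have hq : ∀ (p : Fin s → A) (i : Fin s), q p i = Ideal.Quotient.mk I (p i) := by
    intro p i
    rw [hqdef]
    simp [Ideal.Quotient.algebraMap_eq]
  -- the map ψ : (A/I)ˢ → (A/I) ⊗ M
  set ψ : (Fin s → A ⧸ I) →ₗ[A ⧸ I] ((A ⧸ I) ⊗[A] M) :=
    Fintype.linearCombination (A ⧸ I)
      (fun i => (1 : A ⧸ I) ⊗ₜ[A] f (Pi.single i 1)) with hψdef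
  have hψq : ∀ p : Fin s → A, ψ (q p) = (1 : A ⧸ I) ⊗ₜ[A] f p := by
    intro p
    rw [hψdef, Fintype.linearCombination_apply]
    have h1 : ∀ i, q p i • ((1 : A ⧸ I) ⊗ₜ[A] f (Pi.single i 1))
        = (1 : A ⧸ I) ⊗ₜ[A] f (Pi.single i (p i)) := by
      intro i
      rw [hq, ← Ideal.Quotient.algebraMap_eq, algebraMap_smul, ← tmul_smul, ← map_smul]
      congr 2
      rw [← Pi.single_smul, smul_eq_mul, mul_one]
    rw [Finset.sum_congr rfl fun i _ => h1 i, ← tmul_sum, ← map_sum]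
    congr 2
    exact Finset.univ_sum_single p
  -- surjectivity of ψ
  have hψsurj : Function.Surjective ψ := by
    intro t
    induction t using TensorProduct.induction_on with
    | zero => exact ⟨0, map_zero ψ⟩
    | tmul a m =>
      obtain ⟨a₀, rfl⟩ := Ideal.Quotient.mk_surjective a
      obtain ⟨p, rfl⟩ := hf m
      refine ⟨q (a₀ • p), ?_⟩
      rw [hψq, map_smul, tmul_smul, ← algebraMap_smul (A ⧸ I) a₀, smul_tmul', smul_eq_mul, mul_one,
        Ideal.Quotient.algebraMap_eq]
    | add x y hx hy =>
      obtain ⟨px, hpx⟩ := hx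
      obtain ⟨py, hpy⟩ := hy
      exact ⟨px + py, by rw [map_add, hpx, hpy]⟩
  have hker : (LinearMap.ker ψ).FG := Module.FinitePresentation.fg_ker ψ hψsurj
  obtain ⟨T₀, hT₀⟩ := hker
  have hqsurj : Function.Surjective q := by
    intro t
    choose g hg using fun i => Ideal.Quotient.mk_surjective (I := I) (t i)
    exact ⟨g, funext fun i => by rw [hq]; exact hg i⟩
  have hKlift : ∀ t ∈ LinearMap.ker ψ, ∃ p ∈ LinearMap.ker f, q p = t := by
    intro t ht
    obtain ⟨p', rfl⟩ := hqsurj t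
    have hφp' : (1 : A ⧸ I) ⊗ₜ[A] f p' = 0 := by
      rw [← hψq]; exact ht
    have h2 : f p' ∈ (I • ⊤ : Submodule A M) := by
      have h3 := congrArg (TensorProduct.quotTensorEquivQuotSMul M I) hφp'
      rw [map_zero] at h3
      rw [show (1 : A ⧸ I) = Ideal.Quotient.mk I 1 from (map_one _).symm] at h3
      rw [TensorProduct.quotTensorEquivQuotSMul_mk_tmul, one_smul] at h3
      exact (Submodule.Quotient.mk_eq_zero _).mp h3
    rw [hIdef, Submodule.ideal_span_singleton_smul] at h2
    have h2' : f p' ∈ ϖ • ((⊤ : Submodule A M) : Set M) := by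
      rw [← Submodule.coe_pointwise_smul]; exact h2
    obtain ⟨m₂, -, hm₂⟩ := Set.mem_smul_set.mp h2'
    obtain ⟨u, rfl⟩ := hf m₂
    refine ⟨p' - ϖ • u, ?_, ?_⟩
    · rw [LinearMap.mem_ker, map_sub, map_smul, hm₂, sub_self]
    · rw [map_sub, map_smul]
      have hz : ϖ • q u = 0 := by
        funext i
        rw [Pi.smul_apply, Pi.zero_apply, Algebra.smul_def, Ideal.Quotient.algebraMap_eq,
          Ideal.Quotient.eq_zero_iff_mem.mpr
            (by rw [hIdef]; exact Ideal.mem_span_singleton_self ϖ), zero_mul]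
      rw [hz, sub_zero]
  choose nt hntK hntq using fun t : {x // x ∈ T₀} =>
    hKlift t (by rw [← hT₀]; exact Submodule.subset_span t.2)
  refine ⟨T₀.attach.image nt, ?_, ?_⟩
  · intro t ht
    obtain ⟨t₀, -, rfl⟩ := Finset.mem_image.mp ht
    exact hntK t₀
  · intro k hk
    have hqk : q k ∈ Submodule.span (A ⧸ I) (T₀ : Set (Fin s → A ⧸ I)) := by
      rw [hT₀, LinearMap.mem_ker, hψq, LinearMap.mem_ker.mp hk, tmul_zero]
    obtain ⟨cbar, -, hcbar⟩ := Submodule.mem_span_finset.mp hqk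
    choose c hc using fun t => Ideal.Quotient.mk_surjective (I := I) (cbar t)
    set u : Fin s → A := ∑ t ∈ T₀.attach, c t.1 • nt t with hudef
    have hterm : ∀ t : {x // x ∈ T₀}, q (c t.1 • nt t) = cbar t.1 • (t.1 : Fin s → A ⧸ I) := by
      intro t
      rw [map_smul, hntq, ← hc, ← Ideal.Quotient.algebraMap_eq, algebraMap_smul]
    have hqu : q u = q k := by
      rw [hudef, map_sum, Finset.sum_congr rfl fun t _ => hterm t,
        Finset.sum_attach T₀ (fun t => cbar t • t), hcbar]
    have h0 : q (k - u) = 0 := by rw [map_sub, hqu, sub_self]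
    have hd : ∀ i, ϖ ∣ (k - u) i := by
      intro i
      have h1 : q (k - u) i = 0 := by rw [h0]; rfl
      rw [hq] at h1
      have hmem : (k - u) i ∈ I := Ideal.Quotient.eq_zero_iff_mem.mp h1
      rw [hIdef] at hmem
      exact Ideal.mem_span_singleton.mp hmem
    choose d hdd using hd
    have hku : k - u = ϖ • d := funext fun i => by
      rw [Pi.smul_apply, smul_eq_mul, ← hdd i]
    refine Submodule.mem_sup.mpr ⟨u, ?_, k - u, ?_, by abel⟩
    · rw [hudef]
      refine Submodule.sum_mem _ fun t _ => Submodule.smul_mem _ _ ?_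
      exact Submodule.subset_span
        (Finset.mem_coe.mpr (Finset.mem_image.mpr ⟨t, Finset.mem_attach _ _, rfl⟩))
    · rw [hku]
      exact Submodule.smul_mem_pointwise_smul d ϖ ⊤ Submodule.mem_top

/-- Theorem (finite presentation via π-adic approximation): let `R` be a commutative ring
with distinguished element `π`, let `A` be an `R`-algebra which is `π`-adically complete and
separated, and let `M` be a finite `A`-module, flat over `R`, such that `M/πM` is a finitely
presented `A/πA`-module. Then `M` is a finitely presented `A`-module. -/
theorem finitePresentation_of_flat_of_finitePresentation_mod
    (R : Type*) [CommRing R] (π : R)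
    (A : Type*) [CommRing A] [Algebra R A]
    [IsAdicComplete (Ideal.span {algebraMap R A π}) A]
    (M : Type*) [AddCommGroup M] [Module A M] [Module R M] [IsScalarTower R A M]
    [Module.Finite A M] [Module.Flat R M]
    (hmod : Module.FinitePresentation (A ⧸ Ideal.span {algebraMap R A π})
      ((A ⧸ Ideal.span {algebraMap R A π}) ⊗[A] M)) :
    Module.FinitePresentation A M := by
  classical
  obtain ⟨s, f, hf⟩ := Module.Finite.exists_fin' A M
  set ϖ : A := algebraMap R A π with hϖ
  obtain ⟨T, hTK, hTle⟩ := mod_step ϖ hmod f hf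
  have hflat : ∀ p : Fin s → A, ϖ • p ∈ LinearMap.ker f →
      ∃ k' ∈ LinearMap.ker f, ϖ • k' = ϖ • p := by
    intro p hp
    have hπm : π • f p = 0 := by
      have h1 : f (ϖ • p) = 0 := LinearMap.mem_ker.mp hp
      rw [map_smul, hϖ, algebraMap_smul] at h1
      exact h1
    obtain ⟨p₀, hp₀1, hp₀2⟩ := torsion_lift π (f.restrictScalars R) hf hπm
    refine ⟨p - p₀, ?_, ?_⟩
    · rw [LinearMap.mem_ker, map_sub]
      have h2 : f p₀ = f p := hp₀2
      rw [h2, sub_self]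
    · rw [smul_sub]
      have hz : ϖ • p₀ = 0 := by rw [hϖ, algebraMap_smul, hp₀1]
      rw [hz, sub_zero]
  set K := LinearMap.ker f with hK
  have hTK' : ∀ t : {x // x ∈ T}, (t : Fin s → A) ∈ K := fun t => hTK t t.2
  have hspanle : Submodule.span A (T : Set (Fin s → A)) ≤ K :=
    Submodule.span_le.mpr fun x hx => hTK x hx
  have hle : K ≤ Submodule.span A
      (Set.range (fun t : {x // x ∈ T} => (t : Fin s → A))) ⊔ ϖ • K := by
    intro k hk
    obtain ⟨u, hu, w, hw, huw⟩ := Submodule.mem_sup.mp (hTle hk)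
    have huK : u ∈ K := hspanle hu
    have hwK : w ∈ K := by
      have : w = k - u := by rw [← huw]; abel
      rw [this]
      exact Submodule.sub_mem _ hk huK
    have hw' : w ∈ ϖ • ((⊤ : Submodule A (Fin s → A)) : Set (Fin s → A)) := by
      rw [← Submodule.coe_pointwise_smul]; exact hw
    obtain ⟨p, -, hpw⟩ := Set.mem_smul_set.mp hw'
    obtain ⟨k', hk'K, hk'⟩ := hflat p (by rw [hpw]; exact hwK)
    refine Submodule.mem_sup.mpr ⟨u, ?_, w, ?_, huw⟩
    · have : (T : Set (Fin s → A)) =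
          Set.range (fun t : {x // x ∈ T} => (t : Fin s → A)) := by
        rw [Subtype.range_coe_subtype]
        rfl
      rwa [this] at hu
    · rw [← hpw, ← hk']
      exact Submodule.smul_mem_pointwise_smul k' ϖ K hk'K
  have hKfg : K.FG := by
    have heq : K = Submodule.span A
        (Set.range (fun t : {x // x ∈ T} => (t : Fin s → A))) := by
      refine le_antisymm (key_descent ϖ K _ hTK' hle) (Submodule.span_le.mpr ?_)
      rintro x ⟨t, rfl⟩
      exact hTK' t
    rw [heq]
    exact Submodule.fg_span (Set.finite_range _)
  exact Module.finitePresentation_of_free_of_surjective f hf hKfg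
end

section
/- Let R be a commutative ring with ideal I satisfying the Artin–Rees-type condition (for every finite M and submodule N, ∀n ∃m: N ∩ I^m M ⊆ I^n N), and let N → M → L be an exact sequence of finitely generated R-modules. Then the induced sequence of I-adic completions N^ → M^ → L^ is exact. -/
universe u v

/-- Proposition 7.4.11: if `I` is a finitely generated ideal of `R` satisfying the
Artin–Rees-type condition (for every finite module `M` and submodule `N ⊆ M`, for all `n`
there is `m` with `N ⊓ IᵐM ⊆ IⁿN`), then `I`-adic completion preserves exactness of
sequences of finitely generated modules. -/
theorem adicCompletion_exact_of_artinRees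
    {R : Type u} [CommRing R] (I : Ideal R) (hI : I.FG)
    (hAR : ∀ (M : Type u) [AddCommGroup M] [Module R M], Module.Finite R M →
      ∀ (N : Submodule R M) (n : ℕ), ∃ m : ℕ,
        N ⊓ (I ^ m • ⊤ : Submodule R M) ≤ I ^ n • N)
    (N M L : Type u) [AddCommGroup N] [Module R N] [AddCommGroup M] [Module R M]
    [AddCommGroup L] [Module R L]
    [Module.Finite R N] [Module.Finite R M] [Module.Finite R L]
    (f : N →ₗ[R] M) (g : M →ₗ[R] L) (hfg : Function.Exact f g) :
    Function.Exact (AdicCompletion.map I f) (AdicCompletion.map I g) := by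
  classical
  open AdicCompletion in
  refine LinearMap.exact_of_comp_eq_zero_of_ker_le_range ?_ (fun y ↦ ?_)
  · rw [AdicCompletion.map_comp, hfg.linearMap_comp_eq_zero, AdicCompletion.map_zero]
  · apply AdicCompletion.induction_on I M y (fun b ↦ ?_)
    intro hz
    have hb : ∀ n, g (b n) ∈ (I ^ n • ⊤ : Submodule R L) := fun n ↦ by
      simpa using congrArg (fun x ↦ x.val n) hz
    -- choose `e` for the submodule `range g ⊆ L`, with `e n ≥ n`
    have he : ∀ n : ℕ, ∃ m, n ≤ m ∧
        LinearMap.range g ⊓ (I ^ m • ⊤ : Submodule R L) ≤ I ^ n • LinearMap.range g := by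
      intro n
      obtain ⟨m, hm⟩ := hAR L inferInstance (LinearMap.range g) n
      refine ⟨max m n, le_max_right _ _, le_trans (inf_le_inf_left _ ?_) hm⟩
      exact Submodule.smul_mono_left (Ideal.pow_le_pow_right (le_max_left _ _))
    choose e he1 he2 using he
    -- choose `d` for the submodule `range f ⊆ M`, with `d n ≥ n`
    have hd : ∀ n : ℕ, ∃ m, n ≤ m ∧
        LinearMap.range f ⊓ (I ^ m • ⊤ : Submodule R M) ≤ I ^ n • LinearMap.range f := by
      intro n
      obtain ⟨m, hm⟩ := hAR M inferInstance (LinearMap.range f) n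
      refine ⟨max m n, le_max_right _ _, le_trans (inf_le_inf_left _ ?_) hm⟩
      exact Submodule.smul_mono_left (Ideal.pow_le_pow_right (le_max_left _ _))
    choose d hd1 hd2 using hd
    -- make `d` monotone
    set d' : ℕ → ℕ := fun n ↦ (Finset.range (n + 1)).sup d with hd'def
    have hd'ge : ∀ n, d n ≤ d' n := fun n ↦
      Finset.le_sup (Finset.self_mem_range_succ n)
    have hd'mono : Monotone d' := fun a c hac ↦
      Finset.sup_mono (Finset.range_subset_range.mpr (by omega))
    have hd'n : ∀ n, n ≤ d' n := fun n ↦ le_trans (hd1 n) (hd'ge n)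
    have hd'2 : ∀ n, LinearMap.range f ⊓ (I ^ d' n • ⊤ : Submodule R M)
        ≤ I ^ n • LinearMap.range f := fun n ↦
      le_trans (inf_le_inf_left _
        (Submodule.smul_mono_left (Ideal.pow_le_pow_right (hd'ge n)))) (hd2 n)
    -- split `b (e j) = c j + k j` with `c j ∈ I^j • ⊤` and `k j ∈ range f`
    have hsplit : ∀ j : ℕ, ∃ c : M, c ∈ (I ^ j • ⊤ : Submodule R M) ∧
        b (e j) - c ∈ LinearMap.range f := by
      intro j
      have h1 : g (b (e j)) ∈ LinearMap.range g ⊓ (I ^ e j • ⊤ : Submodule R L) :=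
        ⟨⟨b (e j), rfl⟩, hb (e j)⟩
      have h2 : g (b (e j)) ∈ Submodule.map g (I ^ j • ⊤ : Submodule R M) := by
        rw [Submodule.map_smul'', Submodule.map_top]
        exact he2 j h1
      obtain ⟨c, hc, hgc⟩ := h2
      refine ⟨c, hc, (hfg _).mp ?_⟩
      simp [hgc]
    choose c hc hk using hsplit
    set k : ℕ → M := fun j ↦ b (e j) - c j with hkdef
    -- consecutive differences of `k ∘ d'` lift to `I^n • ⊤` in `N`
    have hstep : ∀ n : ℕ, ∃ δ : N, δ ∈ (I ^ n • ⊤ : Submodule R N) ∧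
        f δ = k (d' (n + 1)) - k (d' n) := by
      intro n
      have hmem : k (d' (n + 1)) - k (d' n) ∈
          LinearMap.range f ⊓ (I ^ d' n • ⊤ : Submodule R M) := by
        refine ⟨Submodule.sub_mem _ (hk _) (hk _), ?_⟩
        have hb' : b (e (d' (n + 1))) - b (e (d' n)) ∈ (I ^ d' n • ⊤ : Submodule R M) := by
          rw [← Submodule.neg_mem_iff, neg_sub]
          have := b.property (show d' n ≤ e (d' (n + 1)) from
            le_trans (le_trans (hd'mono (Nat.le_succ n)) (he1 _)) le_rfl)
          -- b (d' n) ≡ b (e (d' (n+1))) ; we need difference of two b's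
          have h1 := b.property (le_trans (hd'mono (Nat.le_succ n)) (he1 (d' (n + 1))))
          have h2 := b.property (he1 (d' n))
          have := SModEq.sub_mem.mp (h2.symm.trans h1)
          simpa using this
        have hc1 : c (d' (n + 1)) ∈ (I ^ d' n • ⊤ : Submodule R M) :=
          Submodule.smul_mono_left (Ideal.pow_le_pow_right
            (le_trans (hd'mono (Nat.le_succ n)) le_rfl)) (hc _)
        have hc2 : c (d' n) ∈ (I ^ d' n • ⊤ : Submodule R M) := hc _
        have : k (d' (n + 1)) - k (d' n) =
            (b (e (d' (n + 1))) - b (e (d' n))) - (c (d' (n + 1)) - c (d' n)) := by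
          simp only [hkdef]; abel
        rw [this]
        exact Submodule.sub_mem _ hb' (Submodule.sub_mem _ hc1 hc2)
      have := hd'2 n hmem
      have hmem2 : k (d' (n + 1)) - k (d' n) ∈ Submodule.map f (I ^ n • ⊤ : Submodule R N) := by
        rwa [Submodule.map_smul'', Submodule.map_top]
      obtain ⟨δ, hδ, hfδ⟩ := hmem2
      exact ⟨δ, hδ, hfδ⟩
    choose δ hδmem hδf using hstep
    obtain ⟨u0, hu0⟩ := hk (d' 0)
    -- recursively defined preimage sequence
    set u : ℕ → N := fun n ↦ Nat.rec u0 (fun m um ↦ um + δ m) n with hudef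
    have hu : ∀ n, f (u n) = k (d' n) := by
      intro n
      induction n with
      | zero => simpa [hudef] using hu0
      | succ n ih =>
          show f (u n + δ n) = _
          rw [map_add, ih, hδf n]
          abel
    have hucauchy : ∀ n, u n ≡ u (n + 1) [SMOD (I ^ n • ⊤ : Submodule R N)] := by
      intro n
      rw [SModEq.sub_mem]
      have : u n - u (n + 1) = -δ n := by
        show u n - (u n + δ n) = -δ n
        abel
      rw [this]
      exact Submodule.neg_mem _ (hδmem n)
    refine ⟨AdicCompletion.mk I N (AdicCauchySequence.mk I N u hucauchy), ?_⟩
    rw [AdicCompletion.map_mk]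
    ext n
    show Submodule.Quotient.mk (p := (I ^ n • ⊤ : Submodule R M)) (f (u n)) =
      Submodule.Quotient.mk (b n)
    rw [Submodule.Quotient.eq, hu n]
    have h1 : b (e (d' n)) - b n ∈ (I ^ n • ⊤ : Submodule R M) := by
      have := b.property (le_trans (hd'n n) (he1 (d' n)))
      rw [← Submodule.neg_mem_iff, neg_sub]
      exact SModEq.sub_mem.mp this
    have h2 : c (d' n) ∈ (I ^ n • ⊤ : Submodule R M) :=
      Submodule.smul_mono_left (Ideal.pow_le_pow_right (hd'n n)) (hc _)
    have : k (d' n) - b n = (b (e (d' n)) - b n) - c (d' n) := by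
      simp only [hkdef]; abel
    rw [this]
    exact Submodule.sub_mem _ h1 h2
end

section
/- Let R be a commutative ring with finitely generated ideal I satisfying the Artin–Rees condition of Lemma 7.4.9 (induced filtrations on submodules of finite modules are I-adically cofinal). Then for every finitely generated R-module M, the natural map M ⊗_R R^ → M^ to the I-adic completion is an isomorphism. -/
universe u

open LinearMap TensorProduct

namespace ArtinReesG2Aux

variable {R : Type u} [CommRing R] (I : Ideal R)

/-- An element of `I ^ n` lies in `I ^ n • ⊤`. -/
lemma mem_pow_smul_top {a : R} {n : ℕ} (h : a ∈ I ^ n) :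
    a ∈ (I ^ n • ⊤ : Ideal R) := by
  simpa using Submodule.smul_mem_smul h (Submodule.mem_top (x := (1 : R)))

/-- Telescoping: if consecutive differences lie in `I ^ l • ⊤` then distant differences
lie in `I ^ j • ⊤`. -/
lemma sub_mem_of_tele {F : Type u} [AddCommGroup F] [Module R F]
    (v : ℕ → F) (hv : ∀ l, v (l + 1) - v l ∈ (I ^ l • ⊤ : Submodule R F)) :
    ∀ ⦃j j' : ℕ⦄, j ≤ j' → v j' - v j ∈ (I ^ j • ⊤ : Submodule R F) := by
  intro j j' h
  induction j', h using Nat.le_induction with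
  | base => simpa using Submodule.zero_mem _
  | succ j' hj ih =>
    have heq : v (j' + 1) - v j = (v (j' + 1) - v j') + (v j' - v j) := by abel
    rw [heq]
    exact Submodule.add_mem _
      (Submodule.smul_mono_left (Ideal.pow_le_pow_right hj) (hv j')) ih

end ArtinReesG2Aux

open ArtinReesG2Aux

/-- Proposition G2: if the finitely generated ideal `I` of `R` satisfies the Artin–Rees-type
condition of Lemma 7.4.9, then for every finitely generated `R`-module `M` the natural map
`M ⊗_R R^ → M^` to the `I`-adic completion is an isomorphism. -/
theorem adicCompletion_ofTensorProduct_bijective_of_artinRees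
    {R : Type u} [CommRing R] (I : Ideal R) (hI : I.FG)
    (hAR : ∀ (M : Type u) [AddCommGroup M] [Module R M], Module.Finite R M →
      ∀ (N : Submodule R M) (n : ℕ), ∃ m : ℕ,
        N ⊓ (I ^ m • ⊤ : Submodule R M) ≤ I ^ n • N)
    (M : Type u) [AddCommGroup M] [Module R M] [Module.Finite R M] :
    Function.Bijective (AdicCompletion.ofTensorProduct I M) := by
  constructor
  · -- injectivity
    rw [← LinearMap.ker_eq_bot, LinearMap.ker_eq_bot']
    intro x hx
    obtain ⟨r, p, hp⟩ := Module.Finite.exists_fin' R M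
    -- lift x to y in R^ ⊗ F, F := Fin r → R
    have hsurj : Function.Surjective
        (AlgebraTensorModule.map
          (LinearMap.id : AdicCompletion I R →ₗ[AdicCompletion I R] AdicCompletion I R) p) :=
      LinearMap.lTensor_surjective (AdicCompletion I R) hp
    obtain ⟨y, hyx⟩ := hsurj x
    -- naturality
    have h0 : AdicCompletion.map I p (AdicCompletion.ofTensorProduct I (Fin r → R) y) = 0 := by
      have hnat := LinearMap.congr_fun (AdicCompletion.ofTensorProduct_naturality I p) y
      simp only [LinearMap.coe_comp, Function.comp_apply] at hnat
      rw [hnat, hyx, hx]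
    -- represent by a Cauchy sequence
    obtain ⟨f, hf⟩ := AdicCompletion.mk_surjective I (Fin r → R)
      (AdicCompletion.ofTensorProduct I (Fin r → R) y)
    rw [← hf] at h0
    have hpf : ∀ n, p (f n) ∈ (I ^ n • ⊤ : Submodule R M) := by
      intro n
      simpa using congrArg (fun z => z.val n) h0
    -- choose k n in ker p approximating f n
    have hkex : ∀ n, ∃ kk : Fin r → R, p kk = 0 ∧ f n - kk ∈ (I ^ n • ⊤ : Submodule R (Fin r → R)) := by
      intro n
      have : p (f n) ∈ Submodule.map p (I ^ n • ⊤ : Submodule R (Fin r → R)) := by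
        rw [Submodule.map_smul'', Submodule.map_top, LinearMap.range_eq_top.mpr hp]
        exact hpf n
      obtain ⟨ww, hww, hwweq⟩ := this
      refine ⟨f n - ww, ?_, ?_⟩
      · rw [map_sub, hwweq, sub_self]
      · rw [sub_sub_cancel]; exact hww
    choose k hkp hkf using hkex
    -- first Artin-Rees application
    set N : Submodule R (Fin r → R) := Submodule.span R (Set.range k) with hN
    obtain ⟨m₁, hm₁⟩ := hAR (Fin r → R) inferInstance N 1
    set e : Fin (m₁ + 1) → (Fin r → R) := fun i => k i with he
    set N₀ : Submodule R (Fin r → R) := Submodule.span R (Set.range e) with hN₀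
    -- consecutive differences of k
    have hkdiff : ∀ l, k (l + 1) - k l ∈ (I ^ l • ⊤ : Submodule R (Fin r → R)) := by
      intro l
      have heq : k (l + 1) - k l
          = ((f (l + 1) - f l) + (f l - k l)) - (f (l + 1) - k (l + 1)) := by abel
      rw [heq]
      refine Submodule.sub_mem _ (Submodule.add_mem _ ?_ (hkf l)) ?_
      · have h3 := SModEq.sub_mem.mp (f.property (Nat.le_succ l))
        have h4 : (f (l + 1) : Fin r → R) - f l = -((f l : Fin r → R) - f (l + 1)) := by abel
        rw [h4]
        exact Submodule.neg_mem _ h3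
      · exact Submodule.smul_mono_left (Ideal.pow_le_pow_right (Nat.le_succ l)) (hkf (l + 1))
    -- step 1: every k j is in N₀ ⊔ I • N
    have step1 : ∀ j, k j ∈ N₀ ⊔ I • N := by
      intro j
      by_cases hj : j ≤ m₁
      · exact Submodule.mem_sup_left
          (Submodule.subset_span ⟨⟨j, Nat.lt_succ_of_le hj⟩, rfl⟩)
      · push_neg at hj
        have hd : k j - k m₁ ∈ N ⊓ (I ^ m₁ • ⊤ : Submodule R (Fin r → R)) := by
          constructor
          · exact Submodule.sub_mem _ (Submodule.subset_span ⟨j, rfl⟩)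
              (Submodule.subset_span ⟨m₁, rfl⟩)
          · exact sub_mem_of_tele I k hkdiff hj.le
        have hd' := hm₁ hd
        rw [pow_one] at hd'
        have hkm₁ : k m₁ ∈ N₀ := Submodule.subset_span ⟨⟨m₁, Nat.lt_succ_self m₁⟩, rfl⟩
        have heq : k j = (k j - k m₁) + k m₁ := by abel
        rw [heq]
        exact Submodule.add_mem _ (Submodule.mem_sup_right hd') (Submodule.mem_sup_left hkm₁)
    have step1' : N ≤ N₀ ⊔ I • N := by
      rw [hN, Submodule.span_le]
      rintro _ ⟨j, rfl⟩
      exact step1 j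
    -- step 2: N ≤ N₀ ⊔ I^s • N for all s
    have step2 : ∀ s : ℕ, N ≤ N₀ ⊔ (I ^ s • N) := by
      intro s
      induction s with
      | zero =>
        rw [pow_zero, Ideal.one_eq_top, Submodule.top_smul]
        exact le_sup_right
      | succ s ih =>
        refine ih.trans (sup_le le_sup_left ?_)
        have h1 : I ^ s • N ≤ I ^ s • (N₀ ⊔ I • N) := Submodule.smul_mono le_rfl step1'
        rw [Submodule.smul_sup] at h1
        refine h1.trans (sup_le (le_sup_left.trans' Submodule.smul_le_right) ?_)
        have h2 : I ^ s • (I • N) = I ^ (s + 1) • N := by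
          rw [← Submodule.smul_assoc, smul_eq_mul, pow_succ]
        rw [h2]
        exact le_sup_right
    -- f j is within I^j of N₀
    have hfmem : ∀ j, f j ∈ N₀ ⊔ (I ^ j • ⊤ : Submodule R (Fin r → R)) := by
      intro j
      have h1 : k j ∈ N₀ ⊔ I ^ j • N := step2 j (Submodule.subset_span ⟨j, rfl⟩)
      have h2 : N₀ ⊔ I ^ j • N ≤ N₀ ⊔ (I ^ j • ⊤ : Submodule R (Fin r → R)) :=
        sup_le_sup_left (Submodule.smul_mono le_rfl le_top) _
      have heq : f j = k j + (f j - k j) := by abel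
      rw [heq]
      exact Submodule.add_mem _ (h2 h1) (Submodule.mem_sup_right (hkf j))
    have hwex : ∀ j, ∃ wj, wj ∈ N₀ ∧ f j - wj ∈ (I ^ j • ⊤ : Submodule R (Fin r → R)) := by
      intro j
      obtain ⟨a, haN₀, bb, hbb, hab⟩ := Submodule.mem_sup.mp (hfmem j)
      refine ⟨a, haN₀, ?_⟩
      rw [← hab, add_sub_cancel_left]
      exact hbb
    choose w hw1 hw2 using hwex
    -- second Artin-Rees application, to N₀
    have hc'ex := fun n => hAR (Fin r → R) inferInstance N₀ n
    choose c' hc' using hc'ex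
    set m : ℕ → ℕ := fun n => n + ∑ s ∈ Finset.range (n + 1), c' s with hm
    have hmn : ∀ n, n ≤ m n := fun n => Nat.le_add_right n _
    have hmc : ∀ n, c' n ≤ m n := by
      intro n
      have h5 : c' n ≤ ∑ s ∈ Finset.range (n + 1), c' s :=
        Finset.single_le_sum (f := c') (fun i _ => Nat.zero_le _)
          (Finset.self_mem_range_succ n)
      show c' n ≤ n + ∑ s ∈ Finset.range (n + 1), c' s
      omega
    have hmm : ∀ n, m n ≤ m (n + 1) := by
      intro n
      have h5 : ∑ s ∈ Finset.range (n + 1), c' s ≤ ∑ s ∈ Finset.range (n + 1 + 1), c' s :=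
        Finset.sum_le_sum_of_subset (Finset.range_subset_range.mpr (by omega))
      show n + ∑ s ∈ Finset.range (n + 1), c' s ≤ (n + 1) + ∑ s ∈ Finset.range (n + 1 + 1), c' s
      omega
    set u : ℕ → (Fin r → R) := fun n => w (m n) with hu
    have hudiff : ∀ n, u (n + 1) - u n ∈ I ^ n • N₀ := by
      intro n
      refine hc' n ⟨Submodule.sub_mem _ (hw1 _) (hw1 _), ?_⟩
      refine Submodule.smul_mono_left (Ideal.pow_le_pow_right (hmc n)) ?_
      have e1 : f (m (n + 1)) - u (n + 1) ∈ (I ^ (m n) • ⊤ : Submodule R (Fin r → R)) :=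
        Submodule.smul_mono_left (Ideal.pow_le_pow_right (hmm n)) (hw2 _)
      have e2 : f (m n) - u n ∈ (I ^ (m n) • ⊤ : Submodule R (Fin r → R)) := hw2 _
      have e3 : f (m n) - f (m (n + 1)) ∈ (I ^ (m n) • ⊤ : Submodule R (Fin r → R)) :=
        SModEq.sub_mem.mp (f.property (hmm n))
      have heq : u (n + 1) - u n
          = (f (m n) - u n) - (f (m n) - f (m (n + 1))) - (f (m (n + 1)) - u (n + 1)) := by
        abel
      rw [heq]
      exact Submodule.sub_mem _ (Submodule.sub_mem _ e2 e3) e1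
    have hfu : ∀ n, f n - u n ∈ (I ^ n • ⊤ : Submodule R (Fin r → R)) := by
      intro n
      have e1 : f n - f (m n) ∈ (I ^ n • ⊤ : Submodule R (Fin r → R)) :=
        SModEq.sub_mem.mp (f.property (hmn n))
      have e2 : f (m n) - u n ∈ (I ^ n • ⊤ : Submodule R (Fin r → R)) :=
        Submodule.smul_mono_left (Ideal.pow_le_pow_right (hmn n)) (hw2 _)
      have heq : f n - u n = (f n - f (m n)) + (f (m n) - u n) := by abel
      rw [heq]
      exact Submodule.add_mem _ e1 e2
    -- coefficients
    obtain ⟨c, hc⟩ := (Submodule.mem_span_range_iff_exists_fun R).mp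
      (show u 0 ∈ N₀ from hw1 (m 0))
    have haex := fun s => (Submodule.mem_ideal_smul_span_iff_exists_sum (I ^ s) e _).mp
      (by rw [← hN₀]; exact hudiff s)
    choose a ha1 ha2 using haex
    have ha2' : ∀ s, ∑ i, a s i • e i = u (s + 1) - u s := by
      intro s
      rw [← ha2 s]
      exact (Finsupp.sum_fintype (a s) (fun i cc => cc • e i) (fun i => zero_smul R (e i))).symm
    set β : Fin (m₁ + 1) → ℕ → R := fun i n => c i + ∑ s ∈ Finset.range n, a s i with hβ
    have hβc : ∀ i n, β i n ≡ β i (n + 1) [SMOD (I ^ n • ⊤ : Ideal R)] := by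
      intro i n
      rw [SModEq.sub_mem]
      have heq : β i n - β i (n + 1) = -(a n i) := by
        simp only [hβ, Finset.sum_range_succ]
        ring
      rw [heq]
      exact Submodule.neg_mem _ (mem_pow_smul_top I (ha1 n i))
    set b : Fin (m₁ + 1) → AdicCompletion I R :=
      fun i => AdicCompletion.mk I R (AdicCompletion.AdicCauchySequence.mk I R (β i) (hβc i)) with hb
    -- key telescoping identity
    have hkey : ∀ n, ∑ i, β i n • e i = u n := by
      intro n
      induction n with
      | zero => simpa [hβ] using hc
      | succ n ih =>
        have hsplit : ∀ i, β i (n + 1) = β i n + a n i := by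
          intro i
          simp [hβ, Finset.sum_range_succ, add_assoc]
        calc ∑ i, β i (n + 1) • e i
            = ∑ i, (β i n • e i + a n i • e i) := by
              refine Finset.sum_congr rfl fun i _ => ?_
              rw [hsplit i, add_smul]
          _ = (∑ i, β i n • e i) + ∑ i, a n i • e i := Finset.sum_add_distrib
          _ = u n + (u (n + 1) - u n) := by rw [ih, ha2']
          _ = u (n + 1) := by abel
    -- conclude: mk f = ofTensorProduct (∑ b i ⊗ e i)
    have hfinal : AdicCompletion.mk I (Fin r → R) f
        = AdicCompletion.ofTensorProduct I (Fin r → R) (∑ i, b i ⊗ₜ[R] e i) := by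
      rw [map_sum]
      simp only [AdicCompletion.ofTensorProduct_tmul]
      apply AdicCompletion.ext
      intro n
      rw [AdicCompletion.val_sum, Finset.sum_apply]
      have hterm : ∀ i, (b i • AdicCompletion.of I (Fin r → R) (e i)).val n
          = Submodule.mkQ (I ^ n • ⊤ : Submodule R (Fin r → R)) (β i n • e i) := by
        intro i
        rw [AdicCompletion.smul_eval]
        have h1 : (b i).val n = Ideal.Quotient.mk (I ^ n • ⊤ : Ideal R) (β i n) := by
          simp [hb, AdicCompletion.mk, Ideal.Quotient.mk_eq_mk, Submodule.mkQ_apply]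
          rfl
        have h2 : (AdicCompletion.of I (Fin r → R) (e i)).val n
            = Submodule.Quotient.mk (e i) := AdicCompletion.of_apply I (Fin r → R) (e i) n
        rw [h1, h2, AdicCompletion.mk_smul_mk, Submodule.mkQ_apply, ← Submodule.Quotient.mk_smul]
      rw [Finset.sum_congr rfl (fun i _ => hterm i), ← map_sum, hkey]
      show Submodule.mkQ _ (f n) = Submodule.mkQ _ (u n)
      simp only [Submodule.mkQ_apply]
      rw [Submodule.Quotient.eq]
      exact hfu n
    have hyeq : y = ∑ i, b i ⊗ₜ[R] e i :=
      (AdicCompletion.ofTensorProduct_bijective_of_pi_of_fintype I (Fin r)).injective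
        (by rw [← hf, hfinal])
    rw [← hyx, hyeq, map_sum]
    have : ∀ i : Fin (m₁ + 1),
        (AlgebraTensorModule.map
          (LinearMap.id : AdicCompletion I R →ₗ[AdicCompletion I R] AdicCompletion I R) p)
          (b i ⊗ₜ[R] e i) = 0 := by
      intro i
      rw [AlgebraTensorModule.map_tmul]
      have : p (e i) = 0 := hkp _
      rw [this, tmul_zero]
    rw [Finset.sum_congr rfl (fun i _ => this i), Finset.sum_const_zero]
  · exact AdicCompletion.ofTensorProduct_surjective_of_finite I M
end

section
/- Let R be a ring with element π such that R is π-adically complete and separated, let A be an R-algebra that is π-adically complete and separated, and let f₁,…,f_r ∈ A generate the unit ideal. If each completed localization A⟨f_i⁻¹⟩ (the π-adic completion of A[f_i⁻¹]) is flat over A, then the map A → ∏_{i=1}^r A⟨f_i⁻¹⟩ is faithfully flat. -/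
/-- The completed localization `A⟨f⁻¹⟩`: the `π`-adic completion of `A[f⁻¹]`. -/
noncomputable def ComplLoc {A : Type*} [CommRing A] (πA : A) (f : A) : Type _ :=
  AdicCompletion (Ideal.span {algebraMap A (Localization.Away f) πA}) (Localization.Away f)

noncomputable instance {A : Type*} [CommRing A] (πA f : A) : CommRing (ComplLoc πA f) :=
  inferInstanceAs
    (CommRing (AdicCompletion (Ideal.span {algebraMap A (Localization.Away f) πA})
      (Localization.Away f)))

/-- The canonical map `A → A⟨f⁻¹⟩`. -/
noncomputable def complLocMap {A : Type*} [CommRing A] (πA f : A) : A →+* ComplLoc πA f :=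
  (algebraMap (Localization.Away f)
      (AdicCompletion (Ideal.span {algebraMap A (Localization.Away f) πA})
        (Localization.Away f))).comp
    (algebraMap A (Localization.Away f))

/-- If the ideal generated by `m` in the completed localization is everything, and `π ∈ m`,
then `m` already generates the unit ideal in the localization. -/
theorem ComplLoc.map_eq_top {A : Type*} [CommRing A] (πA f : A) (m : Ideal A)
    (hπ : πA ∈ m) (h : Ideal.map (complLocMap πA f) m = ⊤) :
    Ideal.map (algebraMap A (Localization.Away f)) m = ⊤ := by
  set L := Localization.Away f
  set J : Ideal L := Ideal.span {algebraMap A L πA}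
  have h2 : Ideal.map ((AdicCompletion.evalₐ J 1).toRingHom.comp (complLocMap πA f)) m = ⊤ := by
    exact (Ideal.map_map _ _).symm.trans
      ((congrArg (Ideal.map (AdicCompletion.evalₐ J 1).toRingHom) h).trans (Ideal.map_top _))
  have hcomp : (AdicCompletion.evalₐ J 1).toRingHom.comp (complLocMap πA f)
      = (Ideal.Quotient.mk (J ^ 1)).comp (algebraMap A L) := by
    ext a
    show AdicCompletion.evalₐ J 1 (algebraMap L (AdicCompletion J L) (algebraMap A L a)) = _
    rw [AlgHom.commutes]
    rfl
  rw [hcomp, ← Ideal.map_map] at h2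
  have h3 : Ideal.map (algebraMap A L) m ⊔ J ^ 1 = ⊤ := by
    have := congrArg (Ideal.comap (Ideal.Quotient.mk (J ^ 1))) h2
    rwa [Ideal.comap_map_of_surjective _ Ideal.Quotient.mk_surjective,
      ← RingHom.ker_eq_comap_bot, Ideal.mk_ker, Ideal.comap_top] at this
  have hJ : J ^ 1 ≤ Ideal.map (algebraMap A L) m := by
    rw [pow_one]
    rw [Ideal.span_le, Set.singleton_subset_iff]
    exact Ideal.mem_map_of_mem _ hπ
  rwa [sup_eq_left.2 hJ] at h3

/-- If `f ∉ m` for a maximal (prime) ideal `m`, then `m` does not generate the unit ideal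
in the localization away from `f`. -/
theorem map_away_ne_top {A : Type*} [CommRing A] (f : A) (m : Ideal A) (hm : m.IsPrime)
    (hf : f ∉ m) : Ideal.map (algebraMap A (Localization.Away f)) m ≠ ⊤ := by
  have hd : Disjoint ((Submonoid.powers f : Submonoid A) : Set A) (m : Set A) := by
    rw [Set.disjoint_left]
    rintro a ⟨n, rfl⟩ ha
    exact hf (hm.mem_of_pow_mem n ha)
  exact (IsLocalization.isPrime_of_isPrime_disjoint (Submonoid.powers f)
    (Localization.Away f) m hm hd).ne_top

/-- Corollary 7.3/12 (faithful flatness): if `R` and the `R`-algebra `A` are `π`-adically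
complete and separated, `f₁, …, f_r ∈ A` generate the unit ideal, and each completed
localization `A⟨f_i⁻¹⟩` is flat over `A`, then `A → ∏ᵢ A⟨f_i⁻¹⟩` is faithfully flat. -/
theorem prod_complLoc_faithfullyFlat
    (R : Type*) [CommRing R] (π : R) [IsAdicComplete (Ideal.span {π}) R]
    (A : Type*) [CommRing A] [Algebra R A]
    [IsAdicComplete (Ideal.span {algebraMap R A π}) A]
    (r : ℕ) (f : Fin r → A) (hf : Ideal.span (Set.range f) = ⊤)
    (hflat : ∀ i, (complLocMap (algebraMap R A π) (f i)).Flat) :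
    letI : Algebra A (∀ i, ComplLoc (algebraMap R A π) (f i)) :=
      (Pi.ringHom fun i => complLocMap (algebraMap R A π) (f i)).toAlgebra
    Module.FaithfullyFlat A (∀ i, ComplLoc (algebraMap R A π) (f i)) := by
  letI algI : ∀ i, Algebra A (ComplLoc (algebraMap R A π) (f i)) :=
    fun i => (complLocMap (algebraMap R A π) (f i)).toAlgebra
  letI alg : Algebra A (∀ i, ComplLoc (algebraMap R A π) (f i)) :=
    (Pi.ringHom fun i => complLocMap (algebraMap R A π) (f i)).toAlgebra
  haveI flatI : ∀ i, Module.Flat A (ComplLoc (algebraMap R A π) (f i)) :=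
    fun i => hflat i
  refine { toFlat := ?_, submodule_ne_top := ?_ }
  · exact Module.Flat.of_linearEquiv
      (DirectSum.linearEquivFunOnFintype A (Fin r)
        (fun i => ComplLoc (algebraMap R A π) (f i))).symm
  · intro m hm hmtop
    have hπm : algebraMap R A π ∈ m := by
      have h1 : Ideal.span {algebraMap R A π} ≤ (⊥ : Ideal A).jacobson :=
        IsAdicComplete.le_jacobson_bot (Ideal.span {algebraMap R A π})
      have h2 : (⊥ : Ideal A).jacobson ≤ m := sInf_le ⟨bot_le, hm⟩
      exact h2 (h1 (Ideal.subset_span rfl))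
    obtain ⟨i, hfi⟩ : ∃ i, f i ∉ m := by
      by_contra h
      push_neg at h
      exact hm.ne_top (top_le_iff.1 (hf ▸ Ideal.span_le.2 (by rintro _ ⟨i, rfl⟩; exact h i)))
    have hproj : m • (⊤ : Submodule A (ComplLoc (algebraMap R A π) (f i))) = ⊤ := by
      have hsurj : Function.Surjective
          (LinearMap.proj (R := A) (φ := fun j => ComplLoc (algebraMap R A π) (f j)) i) :=
        fun x => ⟨Function.update 0 i x, by simp⟩
      have := congrArg (Submodule.map
        (LinearMap.proj (R := A) (φ := fun j => ComplLoc (algebraMap R A π) (f j)) i)) hmtop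
      erw [Submodule.map_smul'', Submodule.map_top] at this
      rwa [ LinearMap.range_eq_top.2 hsurj] at this
    have hmap : Ideal.map (complLocMap (algebraMap R A π) (f i)) m = ⊤ := by
      rw [Ideal.smul_top_eq_map] at hproj
      simp [Submodule.restrictScalars_mem, Ideal.eq_top_iff_one] at hproj
      exact (Ideal.eq_top_iff_one _).2 hproj
    exact map_away_ne_top (f i) m hm.isPrime hfi
      (ComplLoc.map_eq_top (algebraMap R A π) (f i) m hπm hmap)
end
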